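/- arXiv:2509.06783 — 3 statements merged into one kernel-verified Lean document; each statement's English description precedes it below -/
import Mathlib

section
/- Let c ∈ ℂ∖{0}. If f is a rational function (a quotient of two complex polynomials, defined as a meromorphic function on ℂ) satisfying f′(z) = f(z+c) for all z where both sides are defined, then f is identically zero. -/
open Polynomial

lemma comp_shift_ne_zero {c : ℂ} (R : Polynomial ℂ) (hR : R ≠ 0) :
    R.comp (X + C c) ≠ 0 := by
  intro h
  apply hR
  apply Polynomial.funext
  intro z
  have := congrArg (Polynomial.eval (z - c)) h
  simpa [Polynomial.eval_comp, sub_add_cancel] using this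

lemma degree_comp_shift (c : ℂ) (R : Polynomial ℂ) :
    (R.comp (X + C c)).degree = R.degree := by
  rcases eq_or_ne R 0 with rfl | hR
  · simp
  · have h1 : (X + C c : Polynomial ℂ).natDegree = 1 := by
      simpa using Polynomial.natDegree_X_add_C (a := c)
    have := Polynomial.natDegree_comp (p := R) (q := X + C c)
    rw [h1, mul_one] at this
    rw [Polynomial.degree_eq_natDegree (comp_shift_ne_zero R hR),
      Polynomial.degree_eq_natDegree hR, this]

/-- the equation `f'(z) = f(z+c)` (`c ≠ 0`) has no nonzero rational solutions. -/
theorem stmt6 (c : ℂ) (hc : c ≠ 0) (P Q : Polynomial ℂ) (hQ : Q ≠ 0)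
    (f : ℂ → ℂ) (hf : ∀ z : ℂ, f z = P.eval z / Q.eval z)
    (heq : ∀ z : ℂ, Q.eval z ≠ 0 → Q.eval (z + c) ≠ 0 → deriv f z = f (z + c)) :
    ∀ z : ℂ, f z = 0 := by
  have hfe : f = fun z => P.eval z / Q.eval z := funext hf
  set A : Polynomial ℂ := derivative P * Q - P * derivative Q with hA
  set Qc : Polynomial ℂ := Q.comp (X + C c) with hQc
  set Pc : Polynomial ℂ := P.comp (X + C c) with hPc
  have hQcne : Qc ≠ 0 := comp_shift_ne_zero Q hQ
  -- the key polynomial identity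
  have key : A * Q = Pc * Q ^ 2 * Q / Qc ∨ True := Or.inr trivial
  have hinf : {z : ℂ | Q.eval z ≠ 0 ∧ Qc.eval z ≠ 0}.Infinite := by
    have h1 : {z : ℂ | Q.eval z = 0}.Finite := Polynomial.finite_setOf_isRoot hQ
    have h2 : {z : ℂ | Qc.eval z = 0}.Finite := Polynomial.finite_setOf_isRoot hQcne
    have : {z : ℂ | Q.eval z ≠ 0 ∧ Qc.eval z ≠ 0} =
        ({z : ℂ | Q.eval z = 0} ∪ {z : ℂ | Qc.eval z = 0})ᶜ := by
      ext z; simp [not_or]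
    rw [this]
    exact Set.Finite.infinite_compl (h1.union h2)
  have hid : A * Qc = Pc * Q ^ 2 := by
    apply Polynomial.eq_of_infinite_eval_eq
    apply hinf.mono
    rintro z ⟨hz1, hz2⟩
    have hz2' : Q.eval (z + c) ≠ 0 := by
      simpa [hQc, Polynomial.eval_comp] using hz2
    have hderiv : deriv f z =
        (P.derivative.eval z * Q.eval z - P.eval z * Q.derivative.eval z) /
          (Q.eval z) ^ 2 := by
      rw [hfe]
      rw [deriv_fun_div (Polynomial.differentiableAt P) (Polynomial.differentiableAt Q) hz1]
      simp [Polynomial.deriv]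
    have h := heq z hz1 hz2'
    rw [hderiv, hf (z + c)] at h
    have : (P.derivative.eval z * Q.eval z - P.eval z * Q.derivative.eval z) *
        Q.eval (z + c) = P.eval (z + c) * (Q.eval z) ^ 2 := by
      field_simp at h
      linear_combination h
    simpa [hA, hQc, hPc, Polynomial.eval_comp] using this
  -- now show P = 0
  have hP0 : P = 0 := by
    by_contra hP
    have hPcne : Pc ≠ 0 := comp_shift_ne_zero P hP
    have hRHSne : Pc * Q ^ 2 ≠ 0 := mul_ne_zero hPcne (pow_ne_zero 2 hQ)
    have hAne : A ≠ 0 := by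
      intro h0
      rw [h0, zero_mul] at hid
      exact hRHSne hid.symm
    have hdlt : A.degree < P.degree + Q.degree := by
      have h1 : (derivative P * Q).degree < P.degree + Q.degree := by
        calc (derivative P * Q).degree ≤ (derivative P).degree + Q.degree :=
              Polynomial.degree_mul_le _ _
          _ < P.degree + Q.degree := by
              apply WithBot.add_lt_add_right (Polynomial.degree_ne_bot.mpr hQ)
              exact Polynomial.degree_derivative_lt hP
      have h2 : (P * derivative Q).degree < P.degree + Q.degree := by
        calc (P * derivative Q).degree ≤ P.degree + (derivative Q).degree :=
              Polynomial.degree_mul_le _ _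
          _ < P.degree + Q.degree := by
              apply WithBot.add_lt_add_left (Polynomial.degree_ne_bot.mpr hP)
              exact Polynomial.degree_derivative_lt hQ
      exact lt_of_le_of_lt (Polynomial.degree_sub_le _ _) (max_lt h1 h2)
    have hdeq : A.degree + Q.degree = P.degree + Q.degree + Q.degree := by
      have := congrArg Polynomial.degree hid
      rw [Polynomial.degree_mul, Polynomial.degree_mul, Polynomial.degree_pow,
        degree_comp_shift, degree_comp_shift] at this
      rw [this, two_smul]
      ring
    have : A.degree + Q.degree < P.degree + Q.degree + Q.degree :=
      WithBot.add_lt_add_right (Polynomial.degree_ne_bot.mpr hQ) hdlt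
    rw [hdeq] at this
    exact lt_irrefl _ this
  intro z
  rw [hf, hP0]
  simp
end

section
/- Let n ≥ 1 be an integer, c ∈ ℂ∖{0}, and b_0, …, b_n ∈ ℂ with b_0 ≠ 0 and b_n ≠ 0. If H is an entire function of order ρ(H) < 1 satisfying Σ_{j=0}^n b_j H(z+jc) = 0 for all z ∈ ℂ, then H is a polynomial; and if moreover H is not identically zero, then Σ_{j=0}^n b_j = 0. -/
open scoped ENNReal

/-- Maximum modulus of `f` on the circle of radius `r`. -/
noncomputable def maxMod (f : ℂ → ℂ) (r : ℝ) : ℝ :=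
  sSup ((fun z => ‖f z‖) '' Metric.sphere (0 : ℂ) r)

/-- Order of growth of an entire function, as an extended real number. -/
noncomputable def entireOrder (f : ℂ → ℂ) : EReal :=
  Filter.limsup
    (fun r : ℝ => ((Real.log (Real.log (maxMod f r)) / Real.log r : ℝ) : EReal))
    Filter.atTop

/-- Multiplicity of `z` as a zero of `f` (0 if `f z ≠ 0`). -/
noncomputable def zeroMult (f : ℂ → ℂ) (z : ℂ) : ℕ :=
  sInf {n : ℕ | iteratedDeriv n f z ≠ 0}

/-- Number of zeros of `f`, counted with multiplicity, in the closed disc of radius `r`. -/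
noncomputable def zeroCount (f : ℂ → ℂ) (r : ℝ) : ℝ≥0∞ :=
  ∑' z : ℂ, Set.indicator (Metric.closedBall (0 : ℂ) r)
    (fun w => (zeroMult f w : ℝ≥0∞)) z

/-- Exponent of convergence of the zeros of `f`. -/
noncomputable def convExp (f : ℂ → ℂ) : EReal :=
  Filter.limsup
    (fun r : ℝ => ((Real.log ((zeroCount f r).toReal) / Real.log r : ℝ) : EReal))
    Filter.atTop

/-- `f` is (the evaluation of) a polynomial. -/
def IsPolyFun (f : ℂ → ℂ) : Prop := ∃ p : Polynomial ℂ, ∀ z, f z = p.eval z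

/-- `f` is a transcendental entire function. -/
def TranscEntire (f : ℂ → ℂ) : Prop := Differentiable ℂ f ∧ ¬ IsPolyFun f

/-- `F` and `G` share the function `b` CM: `F - b` and `G - b` have the same zeros
with the same multiplicities. -/
def ShareCM (F G b : ℂ → ℂ) : Prop :=
  ∀ z : ℂ, zeroMult (fun w => F w - b w) z = zeroMult (fun w => G w - b w) z

/-- Nevanlinna characteristic of an entire function (= proximity function). -/
noncomputable def nevT (f : ℂ → ℂ) (r : ℝ) : ℝ :=
  (2 * Real.pi)⁻¹ * ∫ θ in (0 : ℝ)..(2 * Real.pi),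
    max 0 (Real.log ‖f ((r : ℂ) * Complex.exp ((θ : ℂ) * Complex.I))‖)

/-- `b` is a small function of `f`. -/
def SmallFn (b f : ℂ → ℂ) : Prop :=
  ∃ E : Set ℝ, MeasureTheory.volume E < ⊤ ∧
    Filter.Tendsto (fun r => nevT b r / nevT f r)
      (Filter.atTop ⊓ Filter.principal Eᶜ) (nhds 0)


open Polynomial Filter Complex Set Bornology

namespace St8

/-- the shift operator -/
def T (c : ℂ) : Module.End ℂ (ℂ → ℂ) where
  toFun f := fun z => f (z + c)
  map_add' f g := rfl
  map_smul' a f := rfl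

/-- growth bound of order `ρ` type -/
def Bnd (ρ : ℝ) (G : ℂ → ℂ) : Prop :=
  ∃ C : ℝ, 0 ≤ C ∧ ∀ z : ℂ, ‖G z‖ ≤ C * Real.exp (‖z‖ ^ ρ)



theorem rpow_subadd {a b p : ℝ} (ha : 0 ≤ a) (hb : 0 ≤ b) (hp0 : 0 ≤ p) (hp1 : p ≤ 1) :
    (a + b) ^ p ≤ a ^ p + b ^ p := by
  have h := NNReal.rpow_add_le_add_rpow a.toNNReal b.toNNReal hp0 hp1
  rw [← Real.toNNReal_add ha hb] at h
  have h2 := NNReal.coe_le_coe.2 h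
  rw [NNReal.coe_add] at h2
  rwa [← Real.toNNReal_rpow_of_nonneg (by positivity), ← Real.toNNReal_rpow_of_nonneg ha,
    ← Real.toNNReal_rpow_of_nonneg hb, Real.coe_toNNReal _ (by positivity),
    Real.coe_toNNReal _ (by positivity), Real.coe_toNNReal _ (by positivity)] at h2

theorem exp_mono_bound {ρ : ℝ} (hρ0 : 0 < ρ) (m : ℕ) :
    ∃ C : ℝ, 0 ≤ C ∧ ∀ r : ℝ, 0 ≤ r → r ^ m ≤ C * Real.exp (r ^ ρ) := by
  set k : ℕ := ⌈(m : ℝ) / ρ⌉₊ with hk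
  refine ⟨(k.factorial : ℝ), by positivity, fun r hr => ?_⟩
  rcases le_or_gt r 1 with h1 | h1
  · calc r ^ m ≤ 1 := pow_le_one₀ hr h1
      _ ≤ (k.factorial : ℝ) * 1 := by
          rw [mul_one]; exact_mod_cast Nat.one_le_iff_ne_zero.2 (Nat.factorial_ne_zero k)
      _ ≤ (k.factorial : ℝ) * Real.exp (r ^ ρ) := by
          gcongr
          exact Real.one_le_exp (Real.rpow_nonneg hr ρ)
  · have hr1 : (1:ℝ) ≤ r := h1.le
    have hmk : (m : ℝ) ≤ ρ * k := by
      have := Nat.le_ceil ((m : ℝ) / ρ)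
      rw [div_le_iff₀ hρ0] at this
      linarith [this]
    have step1 : r ^ m ≤ r ^ (ρ * k) := by
      rw [← Real.rpow_natCast r m]
      exact Real.rpow_le_rpow_of_exponent_le hr1 hmk
    have step2 : r ^ (ρ * k) = (r ^ ρ) ^ k := by
      rw [Real.rpow_mul (by linarith : (0:ℝ) ≤ r), Real.rpow_natCast]
    have step3 : (r ^ ρ) ^ k ≤ (k.factorial : ℝ) * Real.exp (r ^ ρ) := by
      have hx : (0:ℝ) ≤ r ^ ρ := Real.rpow_nonneg (by linarith) ρ
      have hsum := Real.sum_le_exp_of_nonneg hx (k + 1)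
      have hterm : (r ^ ρ) ^ k / (k.factorial : ℝ) ≤ Real.exp (r ^ ρ) := by
        refine le_trans ?_ hsum
        refine Finset.single_le_sum (f := fun i => (r ^ ρ) ^ i / (i.factorial : ℝ)) ?_ ?_
        · intro i _; positivity
        · exact Finset.self_mem_range_succ k
      rw [div_le_iff₀ (by positivity)] at hterm
      linarith [hterm]
    calc r ^ m ≤ r ^ (ρ * k) := step1
      _ = (r ^ ρ) ^ k := step2
      _ ≤ _ := step3

theorem tendsto_aux {K δ a b : ℝ} (ha : 0 ≤ a) (hab : a < b) (hδ : 0 < δ) :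
    Tendsto (fun x : ℝ => K * x ^ a - δ * x ^ b) atTop atBot := by
  have hb : 0 < b := lt_of_le_of_lt ha hab
  have h0 : Tendsto (fun x : ℝ => x ^ (a - b)) atTop (nhds 0) := by
    have := tendsto_rpow_neg_atTop (y := b - a) (by linarith)
    simpa [neg_sub] using this
  have h1 : ∀ᶠ x : ℝ in atTop, |K| * x ^ (a - b) ≤ δ / 2 := by
    have : Tendsto (fun x : ℝ => |K| * x ^ (a - b)) atTop (nhds (|K| * 0)) :=
      h0.const_mul _
    rw [mul_zero] at this
    exact this.eventually_le_const (by linarith)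
  have h2 : ∀ᶠ x : ℝ in atTop, K * x ^ a - δ * x ^ b ≤ -(δ / 2) * x ^ b := by
    filter_upwards [h1, eventually_gt_atTop 0] with x hx hx0
    have hsplit : x ^ a = x ^ (a - b) * x ^ b := by
      rw [← Real.rpow_add hx0]; ring_nf
    have hKb : K * x ^ a ≤ δ / 2 * x ^ b := by
      calc K * x ^ a ≤ |K| * x ^ a := by
            exact mul_le_mul_of_nonneg_right (le_abs_self K) (Real.rpow_nonneg hx0.le a)
        _ = |K| * x ^ (a - b) * x ^ b := by rw [hsplit]; ring
        _ ≤ δ / 2 * x ^ b := by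
            exact mul_le_mul_of_nonneg_right hx (Real.rpow_nonneg hx0.le b)
    nlinarith [Real.rpow_nonneg hx0.le b]
  have h3 : Tendsto (fun x : ℝ => -(δ / 2) * x ^ b) atTop atBot := by
    have := (tendsto_rpow_atTop hb).const_mul_atTop (by linarith : (0:ℝ) < δ / 2)
    rw [tendsto_neg_atBot_iff.symm] at this
    · simpa [neg_mul] using this
  exact tendsto_atBot_mono' atTop h2 h3

theorem tendsto_exp_aux {K δ a b : ℝ} (ha : 0 ≤ a) (hab : a < b) (hδ : 0 < δ) :
    Tendsto (fun x : ℝ => Real.exp (K * x ^ a - δ * x ^ b)) atTop (nhds 0) :=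
  Real.tendsto_exp_atBot.comp (tendsto_aux ha hab hδ)




section BndLemmas
variable {ρ : ℝ}

theorem bnd_shift (hρ0 : 0 < ρ) (hρ1 : ρ < 1) {G : ℂ → ℂ} (hG : Bnd ρ G) (a : ℂ) : Bnd ρ (fun z => G (z + a)) := by
  obtain ⟨C, hC0, hC⟩ := hG
  refine ⟨C * Real.exp (‖a‖ ^ ρ), by positivity, fun z => ?_⟩
  have h1 : ‖z + a‖ ^ ρ ≤ ‖z‖ ^ ρ + ‖a‖ ^ ρ := by
    calc ‖z + a‖ ^ ρ ≤ (‖z‖ + ‖a‖) ^ ρ := by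
          exact Real.rpow_le_rpow (norm_nonneg _) (norm_add_le _ _) hρ0.le
      _ ≤ _ := rpow_subadd (norm_nonneg _) (norm_nonneg _) hρ0.le hρ1.le
  calc ‖G (z + a)‖ ≤ C * Real.exp (‖z + a‖ ^ ρ) := hC _
    _ ≤ C * Real.exp (‖z‖ ^ ρ + ‖a‖ ^ ρ) := by
        gcongr
    _ = C * Real.exp (‖a‖ ^ ρ) * Real.exp (‖z‖ ^ ρ) := by
        rw [Real.exp_add]; ring

theorem bnd_const_mul {G : ℂ → ℂ} (hG : Bnd ρ G) (a : ℂ) : Bnd ρ (fun z => a * G z) := by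
  obtain ⟨C, hC0, hC⟩ := hG
  refine ⟨‖a‖ * C, by positivity, fun z => ?_⟩
  rw [norm_mul, mul_assoc]
  exact mul_le_mul_of_nonneg_left (hC z) (norm_nonneg _)

theorem bnd_finset_sum (hρ0 : 0 < ρ) {ι : Type*} (s : Finset ι) (F : ι → ℂ → ℂ)
    (h : ∀ i ∈ s, Bnd ρ (F i)) : Bnd ρ (fun z => ∑ i ∈ s, F i z) := by
  classical
  induction s using Finset.induction_on with
  | empty => exact ⟨0, le_refl _, fun z => by simp⟩
  | @insert i s' hnotmem ih =>
    obtain ⟨C1, hC10, hC1⟩ := h i (Finset.mem_insert_self i s')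
    obtain ⟨C2, hC20, hC2⟩ := ih (fun j hj => h j (Finset.mem_insert_of_mem hj))
    refine ⟨C1 + C2, by positivity, fun z => ?_⟩
    simp only []
    rw [Finset.sum_insert hnotmem]
    calc ‖F i z + ∑ j ∈ s', F j z‖
        ≤ ‖F i z‖ + ‖∑ j ∈ s', F j z‖ := norm_add_le _ _
      _ ≤ C1 * Real.exp (‖z‖ ^ ρ) + C2 * Real.exp (‖z‖ ^ ρ) :=
          add_le_add (hC1 z) (hC2 z)
      _ = (C1 + C2) * Real.exp (‖z‖ ^ ρ) := by ring

theorem bnd_poly (hρ0 : 0 < ρ) (p : Polynomial ℂ) : Bnd ρ (fun z => p.eval z) := by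
  have : ∀ j : ℕ, Bnd ρ (fun z => p.coeff j * z ^ j) := by
    intro j
    obtain ⟨C, hC0, hC⟩ := exp_mono_bound hρ0 j
    refine ⟨‖p.coeff j‖ * C, by positivity, fun z => ?_⟩
    rw [norm_mul, norm_pow, mul_assoc]
    exact mul_le_mul_of_nonneg_left (hC _ (norm_nonneg _)) (norm_nonneg _)
  have hsum := bnd_finset_sum hρ0 (Finset.range (p.natDegree + 1))
      (fun j => fun z => p.coeff j * z ^ j) (fun j _ => this j)
  obtain ⟨C, hC0, hC⟩ := hsum
  refine ⟨C, hC0, fun z => ?_⟩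
  have := hC z
  simp only [] at this ⊢
  rwa [eval_eq_sum_range]

theorem bnd_sub {G₁ G₂ : ℂ → ℂ} (h1 : Bnd ρ G₁) (h2 : Bnd ρ G₂) :
    Bnd ρ (fun z => G₁ z - G₂ z) := by
  obtain ⟨C1, hC10, hC1⟩ := h1
  obtain ⟨C2, hC20, hC2⟩ := h2
  refine ⟨C1 + C2, by positivity, fun z => ?_⟩
  calc ‖G₁ z - G₂ z‖ ≤ ‖G₁ z‖ + ‖G₂ z‖ :=
        by simpa [sub_eq_add_neg] using norm_add_le (G₁ z) (-G₂ z)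
    _ ≤ _ := by rw [add_mul]; exact add_le_add (hC1 z) (hC2 z)

end BndLemmas


theorem T_pow_apply (c : ℂ) (k : ℕ) (f : ℂ → ℂ) (z : ℂ) :
    ((T c ^ k) f) z = f (z + (k : ℂ) * c) := by
  induction k generalizing z with
  | zero => simp
  | succ k ih =>
    rw [pow_succ']
    have : ((T c * T c ^ k) f) z = ((T c ^ k) f) (z + c) := rfl
    rw [this, ih]
    push_cast
    ring_nf

theorem apply_aeval (c : ℂ) (Q : Polynomial ℂ) (G : ℂ → ℂ) {m : ℕ} (hm : Q.natDegree < m)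
    (z : ℂ) :
    ((Polynomial.aeval (T c) Q) G) z = ∑ i ∈ Finset.range m, Q.coeff i * G (z + (i : ℂ) * c) := by
  rw [Polynomial.aeval_eq_sum_range' hm]
  rw [LinearMap.coe_sum, Finset.sum_apply, Finset.sum_apply]
  refine Finset.sum_congr rfl fun i _ => ?_
  rw [LinearMap.smul_apply, Pi.smul_apply, smul_eq_mul, T_pow_apply]

theorem preserve {ρ : ℝ} (hρ0 : 0 < ρ) (hρ1 : ρ < 1) (c : ℂ) (Q : Polynomial ℂ) (G : ℂ → ℂ)
    (hGd : Differentiable ℂ G) (hGb : Bnd ρ G) :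
    Differentiable ℂ ((Polynomial.aeval (T c) Q) G) ∧ Bnd ρ ((Polynomial.aeval (T c) Q) G) := by
  have hfun : (Polynomial.aeval (T c) Q) G =
      fun z => ∑ i ∈ Finset.range (Q.natDegree + 1), Q.coeff i * G (z + (i : ℂ) * c) := by
    funext z
    exact apply_aeval c Q G (Nat.lt_succ_self _) z
  rw [hfun]
  constructor
  · apply Differentiable.fun_sum
    intro i _
    exact (hGd.comp (differentiable_id.add_const _)).const_mul _
  · exact bnd_finset_sum hρ0 _ _ fun i _ =>
      bnd_const_mul (bnd_shift hρ0 hρ1 hGb ((i : ℂ) * c)) _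



/-- Re (w ^ ρ') ≥ 0 on the closed right half-plane, for 0 < ρ' < 1. -/
theorem re_cpow_nonneg {ρ' : ℝ} (hρ'0 : 0 < ρ') (hρ'1 : ρ' < 1) {w : ℂ} (hw : 0 ≤ w.re) :
    0 ≤ (w ^ (ρ' : ℂ)).re := by
  rcases eq_or_ne w 0 with rfl | hw0
  · rw [Complex.zero_cpow (by exact_mod_cast hρ'0.ne')]
    simp
  · rw [Complex.cpow_def_of_ne_zero hw0, Complex.exp_re]
    apply mul_nonneg (Real.exp_nonneg _)
    apply Real.cos_nonneg_of_mem_Icc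
    have him : (Complex.log w * (ρ' : ℂ)).im = ρ' * w.arg := by
      simp [Complex.mul_im, Complex.log_im]
      ring
    rw [him]
    have harg : |w.arg| ≤ Real.pi / 2 := Complex.abs_arg_le_pi_div_two_iff.2 hw
    have h1 : |ρ' * w.arg| ≤ Real.pi / 2 := by
      rw [abs_mul, abs_of_pos hρ'0]
      calc ρ' * |w.arg| ≤ 1 * (Real.pi / 2) := by
            apply mul_le_mul hρ'1.le harg (abs_nonneg _) zero_le_one
        _ = Real.pi / 2 := one_mul _
    constructor
    · linarith [(abs_le.1 h1).1]
    · linarith [(abs_le.1 h1).2]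

/-- Phragmén–Lindelöf for the upper half-plane at order ρ < 1,
with boundary bound on the whole real axis. -/
theorem PL_half {ρ : ℝ} (hρ0 : 0 < ρ) (hρ1 : ρ < 1) (F : ℂ → ℂ)
    (hF : Differentiable ℂ F) (A K B : ℝ) (hK : 0 ≤ K)
    (hbound : ∀ w : ℂ, ‖F w‖ ≤ A * Real.exp (K * (1 + |w.im|) ^ ρ))
    (hreal : ∀ x : ℝ, ‖F x‖ ≤ B) :
    ∀ w : ℂ, 0 ≤ w.im → ‖F w‖ ≤ B := by
  have hA : 0 ≤ A := by
    have h := hbound 0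
    nlinarith [norm_nonneg (F 0), Real.exp_pos (K * (1 + |(0:ℂ).im|) ^ ρ)]
  have hB : 0 ≤ B := le_trans (norm_nonneg _) (hreal 0)
  obtain ⟨ρ', hρ'1, hρ'2⟩ := exists_between hρ1
  have hρ'0 : 0 < ρ' := hρ0.trans hρ'1
  -- Main ε-regularized estimate
  have key : ∀ ε : ℝ, 0 < ε → ∀ w : ℂ, 0 ≤ w.im →
      ‖F w‖ ≤ B * Real.exp (ε * ‖w‖ ^ ρ') := by
    intro ε hε w hw
    set u : ℂ := -Complex.I * w with hu
    have hIu : Complex.I * u = w := by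
      rw [hu]; ring_nf; rw [Complex.I_sq]; ring
    have hure : 0 ≤ u.re := by
      rw [hu]
      simp [Complex.mul_re]
      exact hw
    set g : ℂ → ℂ := fun v => Complex.exp (-(ε : ℂ) * v ^ (ρ' : ℂ)) * F (Complex.I * v) with hg
    have habs_g : ∀ v : ℂ, ‖g v‖ =
        Real.exp (-(ε * (v ^ (ρ' : ℂ)).re)) * ‖F (Complex.I * v)‖ := by
      intro v
      rw [hg]
      simp only [norm_mul, Complex.norm_exp]
      congr 2
      simp [Complex.mul_re]
    have him_Iv : ∀ v : ℂ, (Complex.I * v).im = v.re := by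
      intro v; simp [Complex.mul_im]
    -- apply Mathlib PL on right half-plane
    have main : ∀ v : ℂ, 0 ≤ v.re → ‖g v‖ ≤ B := by
      intro v hv
      apply PhragmenLindelof.right_half_plane_of_bounded_on_real (f := g) (C := B) _ _ _ _ hv
      · -- DiffContOnCl
        constructor
        · intro v hv
          apply DifferentiableAt.differentiableWithinAt
          have h1 : DifferentiableAt ℂ (fun v : ℂ => v ^ (ρ' : ℂ)) v := by
            have := (Complex.hasStrictDerivAt_cpow_const
              (x := v) (c := (ρ' : ℂ)) (Or.inl hv)).hasDerivAt.differentiableAt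
            exact this
          exact (((h1.const_mul _).cexp).mul
            ((hF (Complex.I * v)).comp v ((differentiableAt_id.const_mul _))))
        · rw [Complex.closure_setOf_lt_re]
          intro v hv
          apply ContinuousAt.continuousWithinAt
          have h1 : ContinuousAt (fun v : ℂ => v ^ (ρ' : ℂ)) v := by
            apply Complex.continuousAt_cpow_const_of_re_pos (Or.inl hv)
            simp [hρ'0]
          exact ((h1.const_mul _).cexp).mul
            ((hF.continuous.continuousAt).comp (continuousAt_id.const_mul _))
      · -- growth
        refine ⟨ρ, by linarith, K, Asymptotics.IsBigO.of_bound (A * Real.exp K) ?_⟩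
        rw [eventually_inf_principal]
        apply Eventually.of_forall
        intro v hv
        have hv' : (0:ℝ) ≤ v.re := le_of_lt hv
        have h1 : ‖g v‖ ≤ 1 * (A * Real.exp (K * (1 + |v.re|) ^ ρ)) := by
          rw [habs_g v]
          apply mul_le_mul _ _ (norm_nonneg _) zero_le_one
          · rw [Real.exp_le_one_iff]
            have := re_cpow_nonneg hρ'0 hρ'2 hv'
            nlinarith
          · have := hbound (Complex.I * v)
            rwa [him_Iv v] at this
        have h2 : (1 + |v.re|) ^ ρ ≤ 1 + ‖v‖ ^ ρ := by
          calc (1 + |v.re|) ^ ρ ≤ (1 + ‖v‖) ^ ρ := by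
                apply Real.rpow_le_rpow (by positivity) _ hρ0.le
                have := Complex.abs_re_le_norm v
                linarith
            _ ≤ 1 ^ ρ + ‖v‖ ^ ρ :=
                rpow_subadd zero_le_one (norm_nonneg _) hρ0.le hρ1.le
            _ = 1 + ‖v‖ ^ ρ := by rw [Real.one_rpow]
        rw [one_mul] at h1
        have h3 : A * Real.exp (K * (1 + |v.re|) ^ ρ) ≤
            A * Real.exp K * Real.exp (K * ‖v‖ ^ ρ) := by
          rw [mul_assoc, ← Real.exp_add]
          apply mul_le_mul_of_nonneg_left _ hA
          apply Real.exp_le_exp.2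
          nlinarith [h2]
        calc ‖g v‖ ≤ A * Real.exp K * Real.exp (K * ‖v‖ ^ ρ) :=
              le_trans h1 h3
          _ ≤ A * Real.exp K * ‖Real.exp (K * ‖v‖ ^ ρ)‖ := by
              rw [Real.norm_eq_abs, abs_of_pos (Real.exp_pos _)]
      · -- bounded on ℝ≥0 : tendsto 0
        apply Tendsto.isBoundedUnder_le (a := (0:ℝ))
        apply squeeze_zero' (Eventually.of_forall fun x => norm_nonneg _)
          (g := fun x : ℝ => (A * Real.exp K) * Real.exp (K * x ^ ρ - ε * x ^ ρ'))
        · filter_upwards [eventually_ge_atTop (0:ℝ)] with x hx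
          rw [habs_g]
          have hre : (((x : ℂ)) ^ (ρ' : ℂ)).re = x ^ ρ' := by
            rw [← Complex.ofReal_cpow hx]
            simp
          rw [hre]
          have hb : ‖F (Complex.I * x)‖ ≤ A * Real.exp (K * (1 + x) ^ ρ) := by
            have := hbound (Complex.I * x)
            rwa [him_Iv, Complex.ofReal_re, _root_.abs_of_nonneg hx] at this
          have h2 : (1 + x) ^ ρ ≤ 1 + x ^ ρ := by
            calc (1 + x) ^ ρ ≤ 1 ^ ρ + x ^ ρ := rpow_subadd zero_le_one hx hρ0.le hρ1.le
              _ = 1 + x ^ ρ := by rw [Real.one_rpow]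
          calc Real.exp (-(ε * x ^ ρ')) * ‖F (Complex.I * x)‖
              ≤ Real.exp (-(ε * x ^ ρ')) * (A * Real.exp (K * (1 + x) ^ ρ)) := by
                exact mul_le_mul_of_nonneg_left hb (Real.exp_nonneg _)
            _ ≤ Real.exp (-(ε * x ^ ρ')) * (A * Real.exp (K * (1 + x ^ ρ))) := by
                gcongr
            _ = A * (Real.exp (-(ε * x ^ ρ')) * Real.exp (K * (1 + x ^ ρ))) := by ring
            _ = A * Real.exp (K * (1 + x ^ ρ) - ε * x ^ ρ') := by
                rw [← Real.exp_add]; ring_nf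
            _ = A * Real.exp K * Real.exp (K * x ^ ρ - ε * x ^ ρ') := by
                rw [mul_assoc, ← Real.exp_add]; congr 1; ring
        · have h0 : Tendsto (fun x : ℝ => (A * Real.exp K) *
              Real.exp (K * x ^ ρ - ε * x ^ ρ')) atTop (nhds ((A * Real.exp K) * 0)) :=
            Tendsto.const_mul _ (tendsto_exp_aux hρ0.le hρ'1 hε)
          rwa [mul_zero] at h0
      · -- imaginary axis bound
        intro x
        rw [habs_g]
        have h1 : Complex.I * (x * Complex.I) = -(x : ℂ) := by
          ring_nf; rw [Complex.I_sq]; ring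
        rw [h1]
        have h2 : ‖F (-(x:ℂ))‖ ≤ B := by
          have := hreal (-x)
          rwa [Complex.ofReal_neg] at this
        have h3 : Real.exp (-(ε * (((x : ℂ) * Complex.I) ^ (ρ' : ℂ)).re)) ≤ 1 := by
          rw [Real.exp_le_one_iff]
          have hre0 : 0 ≤ ((x:ℂ) * Complex.I).re := by simp
          have := re_cpow_nonneg hρ'0 hρ'2 hre0
          nlinarith
        calc Real.exp (-(ε * (((x : ℂ) * Complex.I) ^ (ρ' : ℂ)).re)) * ‖F (-(x:ℂ))‖
            ≤ 1 * B := mul_le_mul h3 h2 (norm_nonneg _) zero_le_one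
          _ = B := one_mul B
    -- Use the conclusion at v = u
    have hgu := main u hure
    rw [habs_g, hIu] at hgu
    have hexp_pos : 0 < Real.exp (-(ε * (u ^ (ρ' : ℂ)).re)) := Real.exp_pos _
    have h5 : ‖F w‖ ≤ B * Real.exp (ε * (u ^ (ρ' : ℂ)).re) := by
      calc ‖F w‖ =
          Real.exp (-(ε * (u ^ (ρ' : ℂ)).re)) * ‖F w‖ *
            Real.exp (ε * (u ^ (ρ' : ℂ)).re) := by
            rw [mul_comm (Real.exp (-(ε * (u ^ (ρ' : ℂ)).re))) _, mul_assoc, ← Real.exp_add]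
            simp
        _ ≤ B * Real.exp (ε * (u ^ (ρ' : ℂ)).re) :=
            mul_le_mul_of_nonneg_right hgu (Real.exp_nonneg _)
    have h6 : (u ^ (ρ' : ℂ)).re ≤ ‖w‖ ^ ρ' := by
      have h7 : (u ^ (ρ' : ℂ)).re ≤ ‖u ^ (ρ' : ℂ)‖ := Complex.re_le_norm _
      have h8 : ‖u ^ (ρ' : ℂ)‖ ≤ ‖u‖ ^ ρ' := by
        have := Complex.norm_cpow_le u (ρ' : ℂ)
        simpa using this
      have h9 : ‖u‖ = ‖w‖ := by
        rw [hu, norm_mul]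
        simp
      calc (u ^ (ρ' : ℂ)).re ≤ ‖u ^ (ρ' : ℂ)‖ := h7
        _ ≤ ‖u‖ ^ ρ' := h8
        _ = ‖w‖ ^ ρ' := by rw [h9]
    calc ‖F w‖ ≤ B * Real.exp (ε * (u ^ (ρ' : ℂ)).re) := h5
      _ ≤ B * Real.exp (ε * ‖w‖ ^ ρ') := by
          gcongr
  -- let ε → 0⁺
  intro w hw
  have hlim : Tendsto (fun ε : ℝ => B * Real.exp (ε * ‖w‖ ^ ρ'))
      (nhdsWithin 0 (Set.Ioi 0)) (nhds B) := by
    have hc : Continuous fun ε : ℝ => B * Real.exp (ε * ‖w‖ ^ ρ') := by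
      continuity
    have := hc.tendsto 0
    simp only [zero_mul, Real.exp_zero, mul_one] at this
    exact this.mono_left nhdsWithin_le_nhds
  apply ge_of_tendsto hlim
  filter_upwards [self_mem_nhdsWithin] with ε hε
  exact key ε hε w hw




/-- If `x ≤ C * t^k * exp((D + k*E)^ρ)` for all `k` with `t < 1`, then `x ≤ 0`. -/
theorem decay_aux {ρ : ℝ} (hρ0 : 0 < ρ) (hρ1 : ρ < 1) {x t D E C : ℝ}
    (ht0 : 0 ≤ t) (ht1 : t < 1) (hD : 0 ≤ D) (hE : 0 ≤ E) (hC : 0 ≤ C)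
    (hx : ∀ k : ℕ, x ≤ C * (t ^ k * Real.exp ((D + k * E) ^ ρ))) : x ≤ 0 := by
  set t' : ℝ := max t (1/2) with ht'
  have ht'0 : 0 < t' := lt_of_lt_of_le (by norm_num) (le_max_right _ _)
  have ht'1 : t' < 1 := max_lt ht1 (by norm_num)
  have hlog : 0 < -Real.log t' := by
    have := Real.log_neg ht'0 ht'1
    linarith
  -- bound: x ≤ C * exp(D^ρ) * exp(E^ρ * k^ρ - (-log t') * k)
  have hbound : ∀ k : ℕ, x ≤ C * Real.exp (D ^ ρ) *
      Real.exp (E ^ ρ * (k : ℝ) ^ ρ - (-Real.log t') * k) := by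
    intro k
    have h1 : (D + k * E) ^ ρ ≤ D ^ ρ + ((k : ℝ) * E) ^ ρ :=
      rpow_subadd hD (by positivity) hρ0.le hρ1.le
    have h2 : ((k : ℝ) * E) ^ ρ = (k : ℝ) ^ ρ * E ^ ρ :=
      Real.mul_rpow (Nat.cast_nonneg k) hE
    have h3 : t ^ k ≤ t' ^ k := pow_le_pow_left₀ ht0 (le_max_left _ _) k
    have h4 : t' ^ k = Real.exp ((k : ℝ) * Real.log t') := by
      rw [← Real.log_pow, Real.exp_log (pow_pos ht'0 k)]
    calc x ≤ C * (t ^ k * Real.exp ((D + k * E) ^ ρ)) := hx k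
      _ ≤ C * (t' ^ k * Real.exp (D ^ ρ + (k : ℝ) ^ ρ * E ^ ρ)) := by
          apply mul_le_mul_of_nonneg_left _ hC
          apply mul_le_mul h3 _ (Real.exp_nonneg _) (pow_nonneg ht'0.le k)
          apply Real.exp_le_exp.2
          calc (D + ↑k * E) ^ ρ ≤ D ^ ρ + (↑k * E) ^ ρ := h1
            _ = D ^ ρ + ↑k ^ ρ * E ^ ρ := by rw [h2]
      _ = C * Real.exp (D ^ ρ) * Real.exp (E ^ ρ * (k : ℝ) ^ ρ - (-Real.log t') * k) := by
          rw [h4, ← Real.exp_add, mul_assoc, ← Real.exp_add]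
          congr 1
          ring
  have hlim : Tendsto (fun k : ℕ => C * Real.exp (D ^ ρ) *
      Real.exp (E ^ ρ * (k : ℝ) ^ ρ - (-Real.log t') * (k : ℝ))) atTop (nhds 0) := by
    have h0 : Tendsto (fun y : ℝ =>
        Real.exp (E ^ ρ * y ^ ρ - (-Real.log t') * y)) atTop (nhds 0) := by
      have := tendsto_exp_aux (K := E ^ ρ) (δ := -Real.log t') (a := ρ) (b := 1)
        hρ0.le hρ1 hlog
      simpa [Real.rpow_one] using this
    have h1 := (h0.comp tendsto_natCast_atTop_atTop).const_mul (C * Real.exp (D ^ ρ))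
    rw [mul_zero] at h1
    exact h1
  exact ge_of_tendsto hlim (Eventually.of_forall fun k => hbound k)

/-- Key lemma: entire of order < 1 satisfying `G(z+c) = ζ G(z)` is constant. -/
theorem key_const {ρ : ℝ} (hρ0 : 0 < ρ) (hρ1 : ρ < 1) {c : ℂ} (hc : c ≠ 0) (ζ : ℂ)
    {G : ℂ → ℂ} (hGd : Differentiable ℂ G) (hGb : Bnd ρ G)
    (hfe : ∀ z : ℂ, G (z + c) = ζ * G z) : ∀ z w : ℂ, G z = G w := by
  obtain ⟨C, hC0, hC⟩ := hGb
  have hiter : ∀ (k : ℕ) (z : ℂ), G (z + (k : ℂ) * c) = ζ ^ k * G z := by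
    intro k
    induction k with
    | zero => intro z; simp
    | succ k ih =>
      intro z
      have : z + ((k : ℂ) + 1) * c = (z + (k : ℂ) * c) + c := by ring
      push_cast
      rw [this, hfe, ih]
      ring
  rcases lt_trichotomy (‖ζ‖) 1 with hζ | hζ | hζ
  · -- |ζ| < 1 : G ≡ 0
    have hz0 : ∀ z, G z = 0 := by
      intro z
      have habs : ∀ k : ℕ, ‖G z‖ ≤
          C * (‖ζ‖ ^ k *
            Real.exp ((‖z‖ + (k : ℝ) * ‖c‖) ^ ρ)) := by
        intro k
        have h1 : G z = ζ ^ k * G (z - (k : ℂ) * c) := by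
          have := hiter k (z - (k : ℂ) * c)
          rw [sub_add_cancel] at this
          rw [this]
        rw [h1, norm_mul, norm_pow]
        have habsle : ‖z - (k : ℂ) * c‖ ≤
            ‖z‖ + (k : ℝ) * ‖c‖ := by
          calc ‖z - (k : ℂ) * c‖ ≤
              ‖z‖ + ‖(k : ℂ) * c‖ := by
                simpa [sub_eq_add_neg] using norm_add_le z (-((k : ℂ) * c))
            _ = ‖z‖ + (k : ℝ) * ‖c‖ := by rw [norm_mul]; simp
        have h2 : ‖G (z - (k : ℂ) * c)‖ ≤
            C * Real.exp ((‖z‖ + (k : ℝ) * ‖c‖) ^ ρ) :=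
          le_trans (hC _) (mul_le_mul_of_nonneg_left (Real.exp_le_exp.2
            (Real.rpow_le_rpow (norm_nonneg _) habsle hρ0.le)) hC0)
        calc ‖ζ‖ ^ k * ‖G (z - (k : ℂ) * c)‖ ≤
            ‖ζ‖ ^ k * (C * Real.exp ((‖z‖ + ↑k * ‖c‖) ^ ρ)) :=
              mul_le_mul_of_nonneg_left h2 (pow_nonneg (norm_nonneg _) k)
          _ = C * (‖ζ‖ ^ k *
              Real.exp ((‖z‖ + ↑k * ‖c‖) ^ ρ)) := by ring
      have := decay_aux hρ0 hρ1 (norm_nonneg ζ) hζ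
        (norm_nonneg z) (norm_nonneg c) hC0 habs
      have h0 := norm_nonneg (G z)
      have : ‖G z‖ = 0 := le_antisymm this h0
      exact norm_eq_zero.1 this
    intro z w; rw [hz0 z, hz0 w]
  · -- |ζ| = 1 : use Phragmén–Lindelöf
    have hfwd : ∀ (k : ℕ) (z : ℂ), ‖G (z + (k : ℂ) * c)‖ = ‖G z‖ := by
      intro k z
      rw [hiter, norm_mul, norm_pow, hζ, one_pow, one_mul]
    have hZ : ∀ (z : ℂ) (k : ℤ), ‖G (z + (k : ℂ) * c)‖ = ‖G z‖ := by
      intro z k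
      obtain ⟨m, rfl | rfl⟩ := k.eq_nat_or_neg
      · push_cast
        exact hfwd m z
      · have h1 := hfwd m (z + ((-(m : ℤ) : ℤ) : ℂ) * c)
        rw [show z + ((-(m : ℤ) : ℤ) : ℂ) * c + (m : ℂ) * c = z by push_cast; ring] at h1
        exact h1.symm
    set K : ℝ := ‖c‖ ^ ρ with hK
    have hK0 : 0 ≤ K := Real.rpow_nonneg (norm_nonneg _) ρ
    set F : ℂ → ℂ := fun w => G (c * w) with hFdef
    have hFd : Differentiable ℂ F := hGd.comp (differentiable_id.const_mul c)
    have hFb : ∀ w : ℂ, ‖F w‖ ≤ C * Real.exp (K * (1 + |w.im|) ^ ρ) := by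
      intro w
      set k : ℤ := ⌊w.re⌋ with hk
      have hdecomp : c * w = c * (w - (k : ℂ)) + (k : ℂ) * c := by ring
      have h1 : ‖G (c * w)‖ = ‖G (c * (w - (k : ℂ)))‖ := by
        rw [hdecomp]
        exact hZ _ k
      have h2 : ‖c * (w - (k : ℂ))‖ ≤ ‖c‖ * (1 + |w.im|) := by
        rw [norm_mul]
        apply mul_le_mul_of_nonneg_left _ (norm_nonneg _)
        have hre : (w - (k : ℂ)).re = w.re - (k : ℝ) := by
          simp
        have him : (w - (k : ℂ)).im = w.im := by simp
        have hfr1 : 0 ≤ w.re - (k : ℝ) := by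
          rw [hk, Int.self_sub_floor]
          exact Int.fract_nonneg w.re
        have hfr2 : w.re - (k : ℝ) < 1 := by
          rw [hk, Int.self_sub_floor]
          exact Int.fract_lt_one w.re
        calc ‖w - (k : ℂ)‖ ≤ |(w - (k : ℂ)).re| + |(w - (k : ℂ)).im| :=
              Complex.norm_le_abs_re_add_abs_im _
          _ ≤ 1 + |w.im| := by
              rw [hre, him]
              have : |w.re - (k : ℝ)| ≤ 1 := by
                rw [abs_le]
                constructor <;> linarith
              linarith
      have h3 : ‖c * (w - (k : ℂ))‖ ^ ρ ≤ K * (1 + |w.im|) ^ ρ := by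
        rw [hK, ← Real.mul_rpow (norm_nonneg _) (by positivity)]
        exact Real.rpow_le_rpow (norm_nonneg _) h2 hρ0.le
      calc ‖F w‖ = ‖G (c * (w - (k : ℂ)))‖ := h1
        _ ≤ C * Real.exp (‖c * (w - (k : ℂ))‖ ^ ρ) := hC _
        _ ≤ C * Real.exp (K * (1 + |w.im|) ^ ρ) :=
            mul_le_mul_of_nonneg_left (Real.exp_le_exp.2 h3) hC0
    set B : ℝ := C * Real.exp K with hB
    have hFr : ∀ x : ℝ, ‖F x‖ ≤ B := by
      intro x
      have := hFb (x : ℂ)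
      simpa [Complex.ofReal_im, Real.one_rpow] using this
    have hup : ∀ w : ℂ, 0 ≤ w.im → ‖F w‖ ≤ B :=
      PL_half hρ0 hρ1 F hFd C K B hK0 hFb hFr
    have hdown : ∀ w : ℂ, w.im ≤ 0 → ‖F w‖ ≤ B := by
      set F' : ℂ → ℂ := fun w => F (-w) with hF'
      have hF'd : Differentiable ℂ F' := hFd.comp differentiable_neg
      have hF'b : ∀ w : ℂ, ‖F' w‖ ≤ C * Real.exp (K * (1 + |w.im|) ^ ρ) := by
        intro w
        have := hFb (-w)
        simpa [Complex.neg_im, abs_neg] using this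
      have hF'r : ∀ x : ℝ, ‖F' x‖ ≤ B := by
        intro x
        have := hFr (-x)
        simpa [Complex.ofReal_neg] using this
      intro w hw
      have := PL_half hρ0 hρ1 F' hF'd C K B hK0 hF'b hF'r (-w) (by simp; linarith)
      simpa [hF'] using this
    have hbounded : ∀ w : ℂ, ‖F w‖ ≤ B := by
      intro w
      rcases le_total 0 w.im with h | h
      · exact hup w h
      · exact hdown w h
    have hrange : IsBounded (Set.range F) := by
      rw [isBounded_iff_forall_norm_le]
      refine ⟨B, ?_⟩
      rintro x ⟨w, rfl⟩
      exact hbounded w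
    obtain ⟨cst, hcst⟩ := hFd.exists_const_forall_eq_of_bounded hrange
    have hGF : ∀ z : ℂ, G z = F (z / c) := by
      intro z
      rw [hFdef]
      simp only []
      rw [mul_comm, div_mul_cancel₀ z hc]
    intro z w
    rw [hGF z, hGF w, hcst, hcst]
  · -- |ζ| > 1 : G ≡ 0
    have hz0 : ∀ z, G z = 0 := by
      intro z
      have hζ0 : (0:ℝ) < ‖ζ‖ := by linarith
      have habs : ∀ k : ℕ, ‖G z‖ ≤
          C * ((‖ζ‖)⁻¹ ^ k *
            Real.exp ((‖z‖ + (k : ℝ) * ‖c‖) ^ ρ)) := by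
        intro k
        have h1 := hiter k z
        have h2 : ‖G (z + (k : ℂ) * c)‖ = ‖ζ‖ ^ k * ‖G z‖ := by
          rw [h1, norm_mul, norm_pow]
        have h3 : ‖G z‖ =
            (‖ζ‖)⁻¹ ^ k * ‖G (z + (k : ℂ) * c)‖ := by
          rw [h2]
          rw [← mul_assoc, ← mul_pow, inv_mul_cancel₀ hζ0.ne', one_pow, one_mul]
        rw [h3]
        have habsle : ‖z + (k : ℂ) * c‖ ≤
            ‖z‖ + (k : ℝ) * ‖c‖ := by
          calc ‖z + (k : ℂ) * c‖ ≤
              ‖z‖ + ‖(k : ℂ) * c‖ := norm_add_le _ _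
            _ = ‖z‖ + (k : ℝ) * ‖c‖ := by rw [norm_mul]; simp
        have h4 : ‖G (z + (k : ℂ) * c)‖ ≤
            C * Real.exp ((‖z‖ + (k : ℝ) * ‖c‖) ^ ρ) :=
          le_trans (hC _) (mul_le_mul_of_nonneg_left (Real.exp_le_exp.2
            (Real.rpow_le_rpow (norm_nonneg _) habsle hρ0.le)) hC0)
        calc (‖ζ‖)⁻¹ ^ k * ‖G (z + (k : ℂ) * c)‖ ≤
            (‖ζ‖)⁻¹ ^ k *
              (C * Real.exp ((‖z‖ + ↑k * ‖c‖) ^ ρ)) :=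
            mul_le_mul_of_nonneg_left h4 (pow_nonneg (by positivity) k)
          _ = C * ((‖ζ‖)⁻¹ ^ k *
              Real.exp ((‖z‖ + ↑k * ‖c‖) ^ ρ)) := by ring
      have hinv1 : (‖ζ‖)⁻¹ < 1 := by
        rw [inv_lt_one_iff₀]
        right; exact hζ
      have := decay_aux hρ0 hρ1 (by positivity) hinv1
        (norm_nonneg z) (norm_nonneg c) hC0 habs
      have h0 := norm_nonneg (G z)
      have : ‖G z‖ = 0 := le_antisymm this h0
      exact norm_eq_zero.1 this
    intro z w; rw [hz0 z, hz0 w]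



/-- Solve `q(X+c) - ζ q = p` in polynomials, for `c ≠ 0`. -/
theorem solver {c : ℂ} (hc : c ≠ 0) (ζ : ℂ) :
    ∀ (d : ℕ) (p : Polynomial ℂ), (∀ m : ℕ, d ≤ m → p.coeff m = 0) →
      ∃ q : Polynomial ℂ, q.comp (X + C c) - Polynomial.C ζ * q = p := by
  intro d
  induction d with
  | zero =>
    intro p hp
    have : p = 0 := Polynomial.ext fun m => by simpa using hp m (Nat.zero_le m)
    exact ⟨0, by simp [this]⟩
  | succ d ih =>
    intro p hp
    set a : ℂ := p.coeff d with ha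
    by_cases hζ1 : ζ = 1
    · -- q₀ = a' X^(d+1),  a' = ((d+1)c)⁻¹ a
      set a' : ℂ := (((d : ℂ) + 1) * c)⁻¹ * a with ha'
      set q₀ : Polynomial ℂ := Polynomial.C a' * X ^ (d + 1) with hq₀
      have hd1 : ((d : ℂ) + 1) ≠ 0 := by
        have h : ((d + 1 : ℕ) : ℂ) ≠ 0 := Nat.cast_ne_zero.mpr (Nat.succ_ne_zero d)
        push_cast at h
        exact h
      have hL : q₀.comp (X + C c) - Polynomial.C ζ * q₀ =
          Polynomial.C a' * ((X + C c) ^ (d + 1) - X ^ (d + 1)) := by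
        rw [hq₀, hζ1, mul_comp, C_comp, X_pow_comp, map_one]
        ring
      have hcoeffd : (q₀.comp (X + C c) - Polynomial.C ζ * q₀).coeff d = a := by
        rw [hL, coeff_C_mul, coeff_sub, coeff_X_add_C_pow, coeff_X_pow]
        have : d ≠ d + 1 := by omega
        simp only [if_neg this, sub_zero]
        have e1 : d + 1 - d = 1 := by omega
        rw [e1, Nat.choose_succ_self_right, pow_one, ha']
        push_cast
        field_simp
      have hcoeff_up : ∀ m : ℕ, d < m →
          (q₀.comp (X + C c) - Polynomial.C ζ * q₀).coeff m = 0 := by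
        intro m hm
        rw [hL, coeff_C_mul, coeff_sub, coeff_X_add_C_pow, coeff_X_pow]
        rcases eq_or_lt_of_le (Nat.succ_le_of_lt hm) with h | h
        · rw [← h]
          simp
        · have h1 : d + 1 < m := h
          have h2 : Nat.choose (d+1) m = 0 := Nat.choose_eq_zero_of_lt h1
          have h3 : m ≠ d + 1 := by omega
          simp [h2, h3]
      set r : Polynomial ℂ := p - (q₀.comp (X + C c) - Polynomial.C ζ * q₀) with hr
      have hrc : ∀ m : ℕ, d ≤ m → r.coeff m = 0 := by
        intro m hm
        rw [hr, coeff_sub]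
        rcases eq_or_lt_of_le hm with h | h
        · rw [← h, hcoeffd, ← ha, sub_self]
        · rw [hp m (by omega), hcoeff_up m h, sub_self]
      obtain ⟨q₁, hq₁⟩ := ih r hrc
      refine ⟨q₀ + q₁, ?_⟩
      rw [add_comp]
      have hsplit : q₀.comp (X + C c) + q₁.comp (X + C c) - Polynomial.C ζ * (q₀ + q₁)
          = (q₀.comp (X + C c) - Polynomial.C ζ * q₀) +
            (q₁.comp (X + C c) - Polynomial.C ζ * q₁) := by ring
      rw [hsplit, hq₁, hr]
      ring
    · -- q₀ = a' X^d,  a' = (1-ζ)⁻¹ a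
      set a' : ℂ := (1 - ζ)⁻¹ * a with ha'
      set q₀ : Polynomial ℂ := Polynomial.C a' * X ^ d with hq₀
      have hζ0 : (1 : ℂ) - ζ ≠ 0 := fun h => hζ1 (by linear_combination -h)
      have hL : q₀.comp (X + C c) - Polynomial.C ζ * q₀ =
          Polynomial.C a' * ((X + C c) ^ d - Polynomial.C ζ * X ^ d) := by
        rw [hq₀, mul_comp, C_comp, X_pow_comp]
        ring
      have hcoeffd : (q₀.comp (X + C c) - Polynomial.C ζ * q₀).coeff d = a := by
        rw [hL, coeff_C_mul, coeff_sub, coeff_X_add_C_pow, coeff_C_mul, coeff_X_pow]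
        simp only [Nat.sub_self, pow_zero, Nat.choose_self, if_pos rfl]
        rw [ha']
        field_simp
        simp only [ite_true, Nat.cast_one, mul_one]
        ring
      have hcoeff_up : ∀ m : ℕ, d < m →
          (q₀.comp (X + C c) - Polynomial.C ζ * q₀).coeff m = 0 := by
        intro m hm
        rw [hL, coeff_C_mul, coeff_sub, coeff_X_add_C_pow, coeff_C_mul, coeff_X_pow]
        have h2 : Nat.choose d m = 0 := Nat.choose_eq_zero_of_lt hm
        have h3 : m ≠ d := by omega
        simp [h2, h3]
      set r : Polynomial ℂ := p - (q₀.comp (X + C c) - Polynomial.C ζ * q₀) with hr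
      have hrc : ∀ m : ℕ, d ≤ m → r.coeff m = 0 := by
        intro m hm
        rw [hr, coeff_sub]
        rcases eq_or_lt_of_le hm with h | h
        · rw [← h, hcoeffd, ← ha, sub_self]
        · rw [hp m (by omega), hcoeff_up m h, sub_self]
      obtain ⟨q₁, hq₁⟩ := ih r hrc
      refine ⟨q₀ + q₁, ?_⟩
      rw [add_comp]
      have hsplit : q₀.comp (X + C c) + q₁.comp (X + C c) - Polynomial.C ζ * (q₀ + q₁)
          = (q₀.comp (X + C c) - Polynomial.C ζ * q₀) +
            (q₁.comp (X + C c) - Polynomial.C ζ * q₁) := by ring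
      rw [hsplit, hq₁, hr]
      ring

theorem solver_eval {c : ℂ} (hc : c ≠ 0) (ζ : ℂ) (p : Polynomial ℂ) :
    ∃ q : Polynomial ℂ, ∀ z : ℂ, q.eval (z + c) - ζ * q.eval z = p.eval z := by
  obtain ⟨q, hq⟩ := solver hc ζ (p.natDegree + 1) p
    (fun m hm => coeff_eq_zero_of_natDegree_lt (by omega))
  refine ⟨q, fun z => ?_⟩
  have := congrArg (Polynomial.eval z) hq
  rwa [eval_sub, eval_comp, eval_add, eval_X, eval_C, eval_mul, eval_C] at this





theorem key_inhom {ρ : ℝ} (hρ0 : 0 < ρ) (hρ1 : ρ < 1) {c : ℂ} (hc : c ≠ 0) (ζ : ℂ)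
    {G : ℂ → ℂ} (hGd : Differentiable ℂ G) (hGb : Bnd ρ G) (p : Polynomial ℂ)
    (h : ∀ z : ℂ, G (z + c) - ζ * G z = p.eval z) :
    ∃ q : Polynomial ℂ, ∀ z : ℂ, G z = q.eval z := by
  obtain ⟨q, hq⟩ := solver_eval hc ζ p
  set G₂ : ℂ → ℂ := fun z => G z - q.eval z with hG₂
  have hG₂d : Differentiable ℂ G₂ := hGd.sub (q.differentiable)
  have hG₂b : Bnd ρ G₂ := bnd_sub hGb (bnd_poly hρ0 q)
  have hfe : ∀ z : ℂ, G₂ (z + c) = ζ * G₂ z := by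
    intro z
    have h1 := h z
    have h2 := hq z
    simp only [hG₂]
    linear_combination h1 - h2
  have hconst := key_const hρ0 hρ1 hc ζ hG₂d hG₂b hfe
  refine ⟨q + Polynomial.C (G₂ 0), fun z => ?_⟩
  have h3 := hconst z 0
  rw [eval_add, eval_C]
  simp only [hG₂] at h3 ⊢
  linear_combination h3

theorem factor_poly {ρ : ℝ} (hρ0 : 0 < ρ) (hρ1 : ρ < 1) {c : ℂ} (hc : c ≠ 0)
    (s : Multiset ℂ) :
    ∀ G : ℂ → ℂ, Differentiable ℂ G → Bnd ρ G →
      ∀ p : Polynomial ℂ,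
        (∀ z : ℂ, ((Polynomial.aeval (T c)
            ((s.map fun ζ => X - Polynomial.C ζ).prod)) G) z = p.eval z) →
        ∃ q : Polynomial ℂ, ∀ z : ℂ, G z = q.eval z := by
  induction s using Multiset.induction_on with
  | empty =>
    intro G hGd hGb p hp
    refine ⟨p, fun z => ?_⟩
    have := hp z
    rwa [Multiset.map_zero, Multiset.prod_zero, map_one, Module.End.one_apply] at this
  | cons ζ s ih =>
    intro G hGd hGb p hp
    set Q : Polynomial ℂ := (s.map fun ζ => X - Polynomial.C ζ).prod with hQdef
    set G₁ : ℂ → ℂ := (Polynomial.aeval (T c) Q) G with hG₁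
    obtain ⟨hG₁d, hG₁b⟩ := preserve hρ0 hρ1 c Q G hGd hGb
    have h1 : ∀ z : ℂ, G₁ (z + c) - ζ * G₁ z = p.eval z := by
      intro z
      have h0 := hp z
      rw [Multiset.map_cons, Multiset.prod_cons, map_mul, Module.End.mul_apply] at h0
      rw [map_sub, aeval_X, aeval_C] at h0
      rw [LinearMap.sub_apply] at h0
      have e1 : ((T c) G₁) z = G₁ (z + c) := rfl
      have e2 : ((algebraMap ℂ (Module.End ℂ (ℂ → ℂ)) ζ) G₁) z = ζ * G₁ z := by
        rw [Module.algebraMap_end_apply]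
        rfl
      rw [Pi.sub_apply, e1, e2] at h0
      exact h0
    obtain ⟨q₁, hq₁⟩ := key_inhom hρ0 hρ1 hc ζ hG₁d hG₁b p h1
    exact ih G hGd hGb q₁ hq₁

/-- maxMod bounds pointwise values. -/
theorem le_maxMod {H : ℂ → ℂ} (hH : Continuous H) {r : ℝ} {z : ℂ}
    (hz : ‖z‖ = r) : ‖H z‖ ≤ maxMod H r := by
  apply le_csSup
  · exact (isCompact_sphere (0 : ℂ) r).bddAbove_image
      (continuous_norm.comp hH).continuousOn
  · exact ⟨z, by simpa [Metric.mem_sphere, Complex.dist_eq] using hz, rfl⟩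

theorem order_bnd {H : ℂ → ℂ} (hH : Differentiable ℂ H) {ρ : ℝ}
    (hρ : entireOrder H < (ρ : EReal)) (hρ0 : 0 < ρ) : Bnd ρ H := by
  have hev : ∀ᶠ r : ℝ in atTop,
      ((Real.log (Real.log (maxMod H r)) / Real.log r : ℝ) : EReal) < (ρ : EReal) :=
    Filter.eventually_lt_of_limsup_lt hρ
  obtain ⟨R, hR⟩ := eventually_atTop.1 hev
  set R₁ : ℝ := max R 3 with hR₁
  have hMax : ∀ r : ℝ, R₁ ≤ r → maxMod H r ≤ Real.exp 1 * Real.exp (r ^ ρ) := by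
    intro r hr
    have hr3 : (3 : ℝ) ≤ r := le_trans (le_max_right _ _) hr
    have hrpos : (0 : ℝ) < r := by linarith
    have hlogr : 1 < Real.log r := by
      rw [Real.lt_log_iff_exp_lt hrpos]
      calc Real.exp 1 < 2.7182818286 := Real.exp_one_lt_d9
        _ ≤ r := by linarith
    have hcoe := hR r (le_trans (le_max_left _ _) hr)
    have hreal : Real.log (Real.log (maxMod H r)) / Real.log r < ρ := by
      exact_mod_cast hcoe
    have h2 : Real.log (Real.log (maxMod H r)) < ρ * Real.log r := by
      rw [div_lt_iff₀ (by linarith : (0:ℝ) < Real.log r)] at hreal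
      linarith [hreal]
    have hM0 : 0 ≤ maxMod H r := by
      have := le_maxMod hH.continuous (r := r) (z := (r : ℂ))
        (by rw [Complex.norm_of_nonneg hrpos.le])
      exact le_trans (norm_nonneg _) this
    have hexp1 : (1:ℝ) ≤ Real.exp (r ^ ρ) :=
      Real.one_le_exp (Real.rpow_nonneg hrpos.le ρ)
    rcases le_or_gt (Real.log (maxMod H r)) 1 with hlM | hlM
    · rcases le_or_gt (maxMod H r) 0 with h0 | h0
      · nlinarith [Real.exp_pos (1:ℝ)]
      · have : maxMod H r = Real.exp (Real.log (maxMod H r)) := (Real.exp_log h0).symm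
        calc maxMod H r = Real.exp (Real.log (maxMod H r)) := this
          _ ≤ Real.exp 1 := Real.exp_le_exp.2 hlM
          _ ≤ Real.exp 1 * Real.exp (r ^ ρ) := by nlinarith [Real.exp_pos (1:ℝ)]
    · have hlM0 : 0 < Real.log (maxMod H r) := by linarith
      have hM1 : 0 < maxMod H r := by
        rcases lt_or_eq_of_le hM0 with h | h
        · exact h
        · exfalso
          rw [← h, Real.log_zero] at hlM0
          linarith
      have h3 : Real.log (maxMod H r) < r ^ ρ := by
        have := Real.exp_lt_exp.2 h2
        rw [Real.exp_log hlM0] at this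
        calc Real.log (maxMod H r) < Real.exp (ρ * Real.log r) := this
          _ = r ^ ρ := by rw [Real.rpow_def_of_pos hrpos, mul_comm]
      calc maxMod H r = Real.exp (Real.log (maxMod H r)) := (Real.exp_log hM1).symm
        _ ≤ Real.exp (r ^ ρ) := Real.exp_le_exp.2 h3.le
        _ ≤ Real.exp 1 * Real.exp (r ^ ρ) := by nlinarith [Real.exp_pos (r ^ ρ), Real.exp_one_gt_d9]
  -- pointwise bound
  set C₀ : ℝ := sSup ((fun z => ‖H z‖) '' Metric.closedBall (0 : ℂ) R₁) with hC₀
  have hC₀b : ∀ z : ℂ, ‖z‖ ≤ R₁ → ‖H z‖ ≤ C₀ := by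
    intro z hz
    apply le_csSup
    · exact (isCompact_closedBall (0 : ℂ) R₁).bddAbove_image
        (continuous_norm.comp hH.continuous).continuousOn
    · exact ⟨z, by simpa [Metric.mem_closedBall, Complex.dist_eq] using hz, rfl⟩
  refine ⟨max C₀ (Real.exp 1), le_trans (Real.exp_pos 1).le (le_max_right _ _), fun z => ?_⟩
  have hexpz : (1:ℝ) ≤ Real.exp (‖z‖ ^ ρ) :=
    Real.one_le_exp (Real.rpow_nonneg (norm_nonneg _) ρ)
  rcases le_or_gt (‖z‖) R₁ with h | h
  · calc ‖H z‖ ≤ C₀ := hC₀b z h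
      _ ≤ max C₀ (Real.exp 1) := le_max_left _ _
      _ ≤ max C₀ (Real.exp 1) * Real.exp (‖z‖ ^ ρ) := by
          nlinarith [le_trans (norm_nonneg (H z)) (hC₀b z h),
            le_max_left C₀ (Real.exp 1)]
  · have h1 : ‖H z‖ ≤ maxMod H (‖z‖) := le_maxMod hH.continuous rfl
    have h2 := hMax (‖z‖) h.le
    calc ‖H z‖ ≤ Real.exp 1 * Real.exp (‖z‖ ^ ρ) := le_trans h1 h2
      _ ≤ max C₀ (Real.exp 1) * Real.exp (‖z‖ ^ ρ) := by
          have := le_max_right C₀ (Real.exp 1)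
          nlinarith [Real.exp_pos (‖z‖ ^ ρ)]


end St8

/-- entire solutions of order `< 1` of `Σ_{j=0}^n bⱼ H(z+jc) = 0` (with
`b₀ ≠ 0 ≠ bₙ`, `c ≠ 0`) are polynomials, and if `H ≢ 0` then `Σ bⱼ = 0`. -/
theorem stmt8 (n : ℕ) (hn : 1 ≤ n) (c : ℂ) (hc : c ≠ 0) (b : ℕ → ℂ)
    (hb0 : b 0 ≠ 0) (hbn : b n ≠ 0)
    (H : ℂ → ℂ) (hH : Differentiable ℂ H) (hord : entireOrder H < 1)
    (heq : ∀ z : ℂ, ∑ j ∈ Finset.range (n + 1), b j * H (z + (j : ℂ) * c) = 0) :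
    (∃ p : Polynomial ℂ, ∀ z : ℂ, H z = p.eval z) ∧
      ((∃ z : ℂ, H z ≠ 0) → ∑ j ∈ Finset.range (n + 1), b j = 0) := by
  -- choose the order parameter ρ
  have h12 : ((1/2 : ℝ) : EReal) < (1 : EReal) := by
    rw [show (1 : EReal) = ((1:ℝ) : EReal) by norm_num]
    exact_mod_cast (by norm_num : (1/2:ℝ) < 1)
  have hmax : max (entireOrder H) ((1/2:ℝ) : EReal) < 1 := max_lt hord h12
  obtain ⟨x, hx1, hx2⟩ := exists_between hmax
  have hxbot : x ≠ ⊥ := by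
    intro h
    rw [h] at hx1
    exact absurd (lt_of_le_of_lt (le_max_right _ _) hx1) (by simp)
  have hxtop : x ≠ ⊤ := by
    intro h
    rw [h] at hx2
    exact not_top_lt hx2
  set ρ : ℝ := x.toReal with hρdef
  have hxeq : (ρ : EReal) = x := EReal.coe_toReal hxtop hxbot
  have hord' : entireOrder H < (ρ : EReal) := by
    rw [hxeq]
    exact lt_of_le_of_lt (le_max_left _ _) hx1
  have hρhalf : (1/2 : ℝ) < ρ := by
    have h : ((1/2:ℝ) : EReal) < (ρ : EReal) := by
      rw [hxeq]
      exact lt_of_le_of_lt (le_max_right _ _) hx1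
    exact_mod_cast h
  have hρ1 : ρ < 1 := by
    have h : (ρ : EReal) < ((1:ℝ) : EReal) := by
      rw [hxeq, show ((1:ℝ) : EReal) = (1 : EReal) by norm_num]
      exact hx2
    exact_mod_cast h
  have hρ0 : 0 < ρ := by linarith
  have hbnd : St8.Bnd ρ H := St8.order_bnd hH hord' hρ0
  -- the characteristic polynomial
  set P : Polynomial ℂ := ∑ j ∈ Finset.range (n+1), Polynomial.C (b j) * Polynomial.X ^ j
    with hP
  have hPco : ∀ k : ℕ, P.coeff k = if k ∈ Finset.range (n+1) then b k else 0 := by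
    intro k
    rw [hP, Polynomial.finset_sum_coeff]
    have h : ∀ j ∈ Finset.range (n+1),
        (Polynomial.C (b j) * Polynomial.X ^ j).coeff k = if j = k then b j else 0 := by
      intro j _
      rw [Polynomial.coeff_C_mul, Polynomial.coeff_X_pow]
      by_cases hjk : k = j
      · simp [hjk]
      · simp [hjk, Ne.symm hjk]
    rw [Finset.sum_congr rfl h]
    exact Finset.sum_ite_eq' (Finset.range (n+1)) k b
  have hPdeg : P.natDegree ≤ n := by
    rw [Polynomial.natDegree_le_iff_coeff_eq_zero]
    intro N hN
    rw [hPco, if_neg]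
    simp only [Finset.mem_range]
    omega
  have hPn : P.coeff n = b n := by
    rw [hPco, if_pos (Finset.mem_range.2 (by omega))]
  have hPne : P ≠ 0 := fun h => hbn (by rw [← hPn, h, Polynomial.coeff_zero])
  have hlead : P.leadingCoeff ≠ 0 := Polynomial.leadingCoeff_ne_zero.mpr hPne
  -- the functional equation in operator form
  have haP : ∀ z : ℂ, ((Polynomial.aeval (St8.T c) P) H) z = 0 := by
    intro z
    rw [St8.apply_aeval c P H (m := n+1) (by omega) z]
    have h : ∀ i ∈ Finset.range (n+1),
        P.coeff i * H (z + (i:ℂ)*c) = b i * H (z + (i:ℂ)*c) := by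
      intro i hi
      rw [hPco, if_pos hi]
    rw [Finset.sum_congr rfl h]
    exact heq z
  -- factor into linear factors
  have hfac := (IsAlgClosed.splits P).eq_prod_roots
  set Q : Polynomial ℂ := (P.roots.map fun a => Polynomial.X - Polynomial.C a).prod with hQ
  have hQ0 : ∀ z : ℂ, ((Polynomial.aeval (St8.T c) Q) H) z = (0 : Polynomial ℂ).eval z := by
    intro z
    rw [Polynomial.eval_zero]
    have h0 := haP z
    rw [hfac, map_mul, Module.End.mul_apply, Polynomial.aeval_C,
      Module.algebraMap_end_apply] at h0
    have h1 : P.leadingCoeff * ((Polynomial.aeval (St8.T c) Q) H) z = 0 := h0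
    exact (mul_eq_zero.mp h1).resolve_left hlead
  obtain ⟨p, hp⟩ := St8.factor_poly hρ0 hρ1 hc P.roots H hH hbnd 0 hQ0
  refine ⟨⟨p, hp⟩, ?_⟩
  rintro ⟨z₀, hz₀⟩
  have hpne : p ≠ 0 := by
    intro h
    rw [hp z₀, h, Polynomial.eval_zero] at hz₀
    exact hz₀ rfl
  set d : ℕ := p.natDegree with hd
  set q : Polynomial ℂ := ∑ j ∈ Finset.range (n+1),
    Polynomial.C (b j) * (p.comp (Polynomial.X + Polynomial.C ((j:ℂ) * c))) with hq
  have hq0 : q = 0 := by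
    apply Polynomial.funext
    intro z
    rw [Polynomial.eval_zero, hq, Polynomial.eval_finset_sum]
    have h : ∀ j ∈ Finset.range (n+1),
        (Polynomial.C (b j) * p.comp (Polynomial.X + Polynomial.C ((j:ℂ)*c))).eval z
          = b j * H (z + (j:ℂ)*c) := by
      intro j _
      rw [Polynomial.eval_mul, Polynomial.eval_C, Polynomial.eval_comp, Polynomial.eval_add,
        Polynomial.eval_X, Polynomial.eval_C, ← hp]
    rw [Finset.sum_congr rfl h]
    exact heq z
  have hcoeff : q.coeff d = (∑ j ∈ Finset.range (n+1), b j) * p.leadingCoeff := by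
    rw [hq, Polynomial.finset_sum_coeff]
    have h : ∀ j ∈ Finset.range (n+1),
        (Polynomial.C (b j) * p.comp (Polynomial.X + Polynomial.C ((j:ℂ)*c))).coeff d
          = b j * p.leadingCoeff := by
      intro j _
      rw [Polynomial.coeff_C_mul]
      congr 1
      have h1 : (p.comp (Polynomial.X + Polynomial.C ((j:ℂ)*c))).natDegree = d := by
        rw [Polynomial.natDegree_comp, Polynomial.natDegree_X_add_C, mul_one]
      have h2 : (p.comp (Polynomial.X + Polynomial.C ((j:ℂ)*c))).leadingCoeff
          = p.leadingCoeff := by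
        rw [Polynomial.leadingCoeff_comp (by rw [Polynomial.natDegree_X_add_C]; omega),
          Polynomial.leadingCoeff_X_add_C, one_pow, mul_one]
      rw [← h2, Polynomial.leadingCoeff, h1]
    rw [Finset.sum_congr rfl h, ← Finset.sum_mul]
  rw [hq0, Polynomial.coeff_zero] at hcoeff
  rcases mul_eq_zero.mp hcoeff.symm with h | h
  · exact h
  · exact absurd h (Polynomial.leadingCoeff_ne_zero.mpr hpne)
end

section
/- Let k, n ≥ 1 be integers, c, c₁ ∈ ℂ, and a_0, …, a_n ∈ ℂ. If H is an entire function with ρ(H) < 1, not identically zero, satisfying Σ_{j=0}^n a_j e^{jcc₁} H(z+jc) = Σ_{j=0}^k C(k,j) c₁^{k−j} H^(j)(z) for all z ∈ ℂ, then c₁^k = Σ_{j=0}^n a_j e^{jcc₁}. -/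
open scoped ENNReal
open Filter

private lemma iteratedDeriv_iteratedDeriv (f : ℂ → ℂ) (m p : ℕ) :
    iteratedDeriv m (iteratedDeriv p f) = iteratedDeriv (m + p) f := by
  induction p generalizing f with
  | zero => simp [iteratedDeriv_zero]
  | succ p ih =>
      conv_lhs => rw [iteratedDeriv_succ']
      rw [ih, Nat.add_succ, iteratedDeriv_succ']

private lemma contDiff_iteratedDeriv {H : ℂ → ℂ} (hH : Differentiable ℂ H) (p : ℕ) :
    ContDiff ℂ (⊤ : ℕ∞) (iteratedDeriv p H) := by
  induction p with
  | zero => simpa [iteratedDeriv_zero] using (hH.contDiff : ContDiff ℂ (⊤:ℕ∞) H)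
  | succ p ih =>
      rw [iteratedDeriv_succ]
      exact (contDiff_infty_iff_deriv.mp ih).2

private lemma diff_iteratedDeriv {H : ℂ → ℂ} (hH : Differentiable ℂ H) (p : ℕ) :
    Differentiable ℂ (iteratedDeriv p H) :=
  (contDiff_iteratedDeriv hH p).differentiable (by simp)

/-- Cauchy estimate. -/
private lemma cauchy_est {H : ℂ → ℂ} (hH : Differentiable ℂ H) {R M : ℝ} (hR : 0 < R)
    (hM : ∀ z : ℂ, ‖z‖ = R → ‖H z‖ ≤ M) (q : ℕ) :
    ‖iteratedDeriv q H 0‖ ≤ q.factorial * M / R ^ q := by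
  lift R to NNReal using hR.le with Rnn hRnn
  have hRpos : 0 < Rnn := by exact_mod_cast hR
  have h := hH.hasFPowerSeriesOnBall 0 hRpos
  have key := h.factorial_smul (y := (1 : ℂ)) q
  have h1 : iteratedDeriv q H 0 = iteratedFDeriv ℂ q H 0 (fun _ => (1 : ℂ)) :=
    iteratedDeriv_eq_iteratedFDeriv
  have hM0 : 0 ≤ M := by
    refine le_trans (norm_nonneg (H (Rnn : ℝ))) (hM _ ?_)
    simp [Complex.norm_real, abs_of_pos hR]
  have hnorm : ‖iteratedDeriv q H 0‖ ≤ q.factorial * ‖cauchyPowerSeries H 0 Rnn q‖ := by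
    rw [h1, ← key, ← Nat.cast_smul_eq_nsmul ℂ, norm_smul]
    simp only [Complex.norm_natCast]
    refine mul_le_mul_of_nonneg_left ?_ (by positivity)
    calc ‖(cauchyPowerSeries H 0 Rnn q) (fun _ => (1:ℂ))‖
        ≤ ‖cauchyPowerSeries H 0 Rnn q‖ * ∏ _i : Fin q, ‖(1:ℂ)‖ :=
          (cauchyPowerSeries H 0 Rnn q).le_opNorm _
      _ = ‖cauchyPowerSeries H 0 Rnn q‖ := by simp
  have hcps : ‖cauchyPowerSeries H 0 Rnn q‖ ≤ M / (Rnn:ℝ) ^ q := by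
    refine le_trans (norm_cauchyPowerSeries_le H 0 Rnn q) ?_
    have hint : (∫ θ : ℝ in (0)..2 * Real.pi, ‖H (circleMap 0 Rnn θ)‖) ≤ 2 * Real.pi * M := by
      have hb : ∀ θ ∈ Set.Icc (0:ℝ) (2 * Real.pi), ‖H (circleMap 0 Rnn θ)‖ ≤ M := by
        intro θ _
        refine hM _ ?_
        have := norm_circleMap_zero (Rnn : ℝ) θ
        simpa [abs_of_pos hR] using this
        
      calc (∫ θ : ℝ in (0)..2 * Real.pi, ‖H (circleMap 0 Rnn θ)‖)
          ≤ ∫ _θ : ℝ in (0)..2 * Real.pi, M := by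
            refine intervalIntegral.integral_mono_on Real.two_pi_pos.le ?_ ?_ hb
            · exact ((hH.continuous.comp (continuous_circleMap 0 Rnn)).norm).intervalIntegrable 0 _
            · exact intervalIntegrable_const
        _ = 2 * Real.pi * M := by simp [mul_comm]
    calc ((2 * Real.pi)⁻¹ * ∫ θ : ℝ in (0)..2 * Real.pi, ‖H (circleMap 0 Rnn θ)‖) * |(Rnn:ℝ)|⁻¹ ^ q
        ≤ ((2 * Real.pi)⁻¹ * (2 * Real.pi * M)) * |(Rnn:ℝ)|⁻¹ ^ q := by
          refine mul_le_mul_of_nonneg_right (mul_le_mul_of_nonneg_left hint (by positivity))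
            (by positivity)
      _ = M / (Rnn:ℝ) ^ q := by
          rw [abs_of_pos hR]
          field_simp
          rw [div_pow, one_pow, mul_assoc, one_div_mul_cancel (pow_ne_zero _ hR.ne'), mul_one]
  calc ‖iteratedDeriv q H 0‖ ≤ q.factorial * ‖cauchyPowerSeries H 0 Rnn q‖ := hnorm
    _ ≤ q.factorial * (M / (Rnn:ℝ) ^ q) := mul_le_mul_of_nonneg_left hcps (by positivity)
    _ = q.factorial * M / (Rnn:ℝ) ^ q := by ring

private lemma le_maxMod {H : ℂ → ℂ} (hH : Differentiable ℂ H) (z : ℂ) :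
    ‖H z‖ ≤ maxMod H ‖z‖ := by
  have hbdd : BddAbove ((fun w => ‖H w‖) '' Metric.sphere (0 : ℂ) ‖z‖) :=
    (isCompact_sphere 0 ‖z‖).bddAbove_image
      (continuous_norm.comp hH.continuous).continuousOn
  exact le_csSup hbdd ⟨z, by simp [mem_sphere_iff_norm], rfl⟩

private lemma growth_bound {H : ℂ → ℂ} (hH : Differentiable ℂ H) (hord : entireOrder H < 1)
    {ε : ℝ} (hε : 0 < ε) :
    ∃ C : ℝ, 1 ≤ C ∧ ∀ z : ℂ, ‖H z‖ ≤ C * Real.exp (ε * ‖z‖) := by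
  obtain ⟨b, hb1, hb2⟩ := exists_between hord
  have hbbot : b ≠ ⊥ := (bot_le.trans_lt hb1).ne'
  have hbtop : b ≠ ⊤ := (hb2.trans_le le_top).ne
  set σ0 : ℝ := b.toReal with hσ0
  have hbco : (σ0 : EReal) = b := EReal.coe_toReal hbtop hbbot
  have hσ01 : σ0 < 1 := by
    have : (σ0 : EReal) < ((1:ℝ) : EReal) := by rw [hbco]; exact_mod_cast hb2
    exact_mod_cast this
  set σ : ℝ := max σ0 (1/2) with hσdef
  have hσ1 : σ < 1 := max_lt hσ01 (by norm_num)
  have hσpos : 0 < σ := lt_of_lt_of_le (by norm_num) (le_max_right _ _)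
  -- eventually the log-log quotient is < σ0 ≤ σ
  have hev : ∀ᶠ r : ℝ in atTop,
      Real.log (Real.log (maxMod H r)) / Real.log r < σ0 := by
    have h1 : ∀ᶠ r : ℝ in atTop,
        ((Real.log (Real.log (maxMod H r)) / Real.log r : ℝ) : EReal) < (σ0 : EReal) := by
      refine Filter.eventually_lt_of_limsup_lt ?_
      rw [hbco]; exact hb1
    exact h1.mono fun r hr => by exact_mod_cast hr
  -- eventually r ^ σ ≤ ε * r
  have hrp : ∀ᶠ r : ℝ in atTop, r ^ (σ - 1) < ε := by
    have := tendsto_rpow_neg_atTop (y := 1 - σ) (by linarith)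
    simp only [neg_sub] at this
    exact this.eventually_lt_const hε
  have hbig : ∀ᶠ r : ℝ in atTop, maxMod H r ≤ Real.exp (ε * r) := by
    filter_upwards [hev, hrp, eventually_ge_atTop (2:ℝ)] with r h1 h2 hr2
    have hrpos : (0:ℝ) < r := by linarith
    have hlogr : 0 < Real.log r := Real.log_pos (by linarith)
    have hq : Real.log (Real.log (maxMod H r)) < σ * Real.log r := by
      have : Real.log (Real.log (maxMod H r)) / Real.log r < σ :=
        lt_of_lt_of_le h1 (le_max_left _ _)
      exact (div_lt_iff₀ hlogr).mp this
    have hrσ : r ^ σ ≤ ε * r := by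
      have : r ^ σ = r ^ (σ - 1) * r := by
        rw [← Real.rpow_add_one hrpos.ne' (σ - 1)]; ring_nf
      rw [this]
      exact mul_le_mul_of_nonneg_right h2.le hrpos.le
    have hM : maxMod H r ≤ Real.exp (r ^ σ) := by
      by_cases hM1 : maxMod H r ≤ 1
      · exact hM1.trans (Real.one_le_exp (Real.rpow_nonneg hrpos.le σ))
      · push_neg at hM1
        have hlogM : 0 < Real.log (maxMod H r) := Real.log_pos hM1
        have : Real.log (maxMod H r) < r ^ σ := by
          calc Real.log (maxMod H r) = Real.exp (Real.log (Real.log (maxMod H r))) :=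
                (Real.exp_log hlogM).symm
            _ < Real.exp (σ * Real.log r) := Real.exp_lt_exp.mpr hq
            _ = r ^ σ := by rw [Real.rpow_def_of_pos hrpos, mul_comm]
        calc maxMod H r = Real.exp (Real.log (maxMod H r)) :=
              (Real.exp_log (by linarith)).symm
          _ ≤ Real.exp (r ^ σ) := Real.exp_le_exp.mpr this.le
    exact hM.trans (Real.exp_le_exp.mpr hrσ)
  obtain ⟨R, hR⟩ := eventually_atTop.mp hbig
  set R₂ : ℝ := max R 0 with hR₂
  obtain ⟨w, _, hwmax⟩ := (isCompact_closedBall (0:ℂ) R₂).exists_isMaxOn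
    ⟨0, by simp [hR₂]⟩ hH.continuous.norm.continuousOn
  refine ⟨max ‖H w‖ 1, le_max_right _ _, fun z => ?_⟩
  by_cases hz : ‖z‖ ≤ R₂
  · have h1 : ‖H z‖ ≤ ‖H w‖ := hwmax (by simpa [Metric.mem_closedBall, Complex.dist_eq,
      mem_closedBall_zero_iff] using hz)
    calc ‖H z‖ ≤ max ‖H w‖ 1 := h1.trans (le_max_left _ _)
      _ = max ‖H w‖ 1 * 1 := (mul_one _).symm
      _ ≤ max ‖H w‖ 1 * Real.exp (ε * ‖z‖) := by
          refine mul_le_mul_of_nonneg_left (Real.one_le_exp (by positivity)) ?_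
          exact le_trans zero_le_one (le_max_right _ _)
  · push_neg at hz
    have h1 : ‖H z‖ ≤ maxMod H ‖z‖ := le_maxMod hH z
    have h2 : maxMod H ‖z‖ ≤ Real.exp (ε * ‖z‖) :=
      hR _ (le_trans (le_max_left _ _) hz.le)
    calc ‖H z‖ ≤ Real.exp (ε * ‖z‖) := h1.trans h2
      _ = 1 * Real.exp (ε * ‖z‖) := (one_mul _).symm
      _ ≤ max ‖H w‖ 1 * Real.exp (ε * ‖z‖) :=
          mul_le_mul_of_nonneg_right (le_max_right _ _) (Real.exp_nonneg _)

private lemma coeff_decay {H : ℂ → ℂ} (hH : Differentiable ℂ H)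
    (hgb : ∀ ε : ℝ, 0 < ε → ∃ C : ℝ, 1 ≤ C ∧ ∀ z : ℂ, ‖H z‖ ≤ C * Real.exp (ε * ‖z‖))
    {δ : ℝ} (hδ : 0 < δ) :
    ∃ C : ℝ, 1 ≤ C ∧ ∀ q : ℕ, ‖iteratedDeriv q H 0‖ ≤ C * δ ^ q := by
  set ε : ℝ := δ / 3 with hεdef
  have hε : 0 < ε := by positivity
  obtain ⟨C, hC1, hC⟩ := hgb ε hε
  refine ⟨C, hC1, fun q => ?_⟩
  rcases Nat.eq_zero_or_pos q with rfl | hq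
  · simpa [iteratedDeriv_zero] using (hC 0).trans (by simp)
  · have hqR : (0:ℝ) < (q:ℝ) / ε := by positivity
    have hM : ∀ z : ℂ, ‖z‖ = (q:ℝ) / ε → ‖H z‖ ≤ C * Real.exp q := by
      intro z hz
      have := hC z
      rw [hz] at this
      have hεq : ε * ((q:ℝ) / ε) = q := by field_simp
      rwa [hεq] at this
    have h1 := cauchy_est hH hqR hM q
    refine h1.trans ?_
    rw [div_le_iff₀ (by positivity)]
    have hexp : Real.exp (q:ℝ) = Real.exp 1 ^ q := by
      rw [← Real.exp_nat_mul]; norm_num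
    have hfact : (q.factorial : ℝ) ≤ (q:ℝ) ^ q := by
      exact_mod_cast Nat.factorial_le_pow q
    have hexp3 : Real.exp 1 ≤ 3 := by
      have := Real.exp_one_lt_d9
      linarith
    calc (q.factorial : ℝ) * (C * Real.exp q)
        ≤ (q:ℝ) ^ q * (C * 3 ^ q) := by
          rw [hexp]
          have h3 : Real.exp 1 ^ q ≤ 3 ^ q :=
            pow_le_pow_left₀ (Real.exp_nonneg 1) hexp3 q
          have : C * Real.exp 1 ^ q ≤ C * 3 ^ q :=
            mul_le_mul_of_nonneg_left h3 (by linarith)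
          exact mul_le_mul hfact this (by positivity) (by positivity)
      _ = C * δ ^ q * ((q:ℝ) / ε) ^ q := by
          rw [hεdef, div_pow, div_pow]
          have hq3 : (0:ℝ) < (δ/3) ^ q := by positivity
          field_simp

private lemma deriv_identity (k n : ℕ) (c c₁ : ℂ) (a : ℕ → ℂ) (H : ℂ → ℂ)
    (hH : Differentiable ℂ H)
    (heq : ∀ z : ℂ, ∑ j ∈ Finset.range (n + 1),
        a j * Complex.exp ((j : ℂ) * c * c₁) * H (z + (j : ℂ) * c)
      = ∑ j ∈ Finset.range (k + 1),
        (k.choose j : ℂ) * c₁ ^ (k - j) * iteratedDeriv j H z) :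
    ∀ (p : ℕ) (z : ℂ),
      ∑ j ∈ Finset.range (n + 1),
        a j * Complex.exp ((j : ℂ) * c * c₁) * iteratedDeriv p H (z + (j : ℂ) * c)
      = ∑ m ∈ Finset.range (k + 1),
        (k.choose m : ℂ) * c₁ ^ (k - m) * iteratedDeriv (m + p) H z := by
  intro p
  induction p with
  | zero => intro z; simpa [iteratedDeriv_zero] using heq z
  | succ p ih =>
    intro z
    have hfun : (fun w => ∑ j ∈ Finset.range (n + 1),
          a j * Complex.exp ((j : ℂ) * c * c₁) * iteratedDeriv p H (w + (j : ℂ) * c))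
        = fun w => ∑ m ∈ Finset.range (k + 1),
          (k.choose m : ℂ) * c₁ ^ (k - m) * iteratedDeriv (m + p) H w := funext ih
    have hz := congrFun (congrArg deriv hfun) z
    have hL : deriv (fun w => ∑ j ∈ Finset.range (n + 1),
          a j * Complex.exp ((j : ℂ) * c * c₁) * iteratedDeriv p H (w + (j : ℂ) * c)) z
        = ∑ j ∈ Finset.range (n + 1),
          a j * Complex.exp ((j : ℂ) * c * c₁) * iteratedDeriv (p + 1) H (z + (j : ℂ) * c) := by
      have hdiff : ∀ j : ℕ, DifferentiableAt ℂ
          (fun w : ℂ => iteratedDeriv p H (w + (j : ℂ) * c)) z :=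
        fun j => DifferentiableAt.comp z ((diff_iteratedDeriv hH p) _)
          (differentiableAt_id.add_const _)
      rw [deriv_fun_sum (fun j _ => (hdiff j).const_mul _)]
      refine Finset.sum_congr rfl fun j _ => ?_
      rw [deriv_const_mul _ (hdiff j)]
      congr 1
      rw [deriv_comp_add_const, iteratedDeriv_succ]
    have hR : deriv (fun w => ∑ m ∈ Finset.range (k + 1),
          (k.choose m : ℂ) * c₁ ^ (k - m) * iteratedDeriv (m + p) H w) z
        = ∑ m ∈ Finset.range (k + 1),
          (k.choose m : ℂ) * c₁ ^ (k - m) * iteratedDeriv (m + (p + 1)) H z := by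
      rw [deriv_fun_sum (fun m _ => ((diff_iteratedDeriv hH (m + p)) z).const_mul _)]
      refine Finset.sum_congr rfl fun m _ => ?_
      rw [deriv_const_mul _ ((diff_iteratedDeriv hH (m + p)) z), Nat.add_succ,
        iteratedDeriv_succ]
    rw [hL, hR] at hz
    exact hz

private lemma key_hasSum (k n : ℕ) (c c₁ : ℂ) (a : ℕ → ℂ) (H : ℂ → ℂ)
    (hH : Differentiable ℂ H)
    (heq : ∀ z : ℂ, ∑ j ∈ Finset.range (n + 1),
        a j * Complex.exp ((j : ℂ) * c * c₁) * H (z + (j : ℂ) * c)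
      = ∑ j ∈ Finset.range (k + 1),
        (k.choose j : ℂ) * c₁ ^ (k - j) * iteratedDeriv j H z) (p : ℕ) :
    HasSum (fun m : ℕ =>
      ((∑ j ∈ Finset.range (n + 1),
          a j * Complex.exp ((j : ℂ) * c * c₁) * ((m.factorial : ℂ))⁻¹ * ((j : ℂ) * c) ^ m)
        - (if m ≤ k then (k.choose m : ℂ) * c₁ ^ (k - m) else 0))
      * iteratedDeriv (m + p) H 0) 0 := by
  have hG := diff_iteratedDeriv hH p
  have T : ∀ j : ℕ, HasSum
      (fun m : ℕ => a j * Complex.exp ((j : ℂ) * c * c₁) * ((m.factorial : ℂ))⁻¹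
        * ((j : ℂ) * c) ^ m * iteratedDeriv (m + p) H 0)
      (a j * Complex.exp ((j : ℂ) * c * c₁) * iteratedDeriv p H ((j : ℂ) * c)) := by
    intro j
    have h0 := Complex.hasSum_taylorSeries_of_entire hG 0 ((j : ℂ) * c)
    have h1 : (fun m : ℕ => (m.factorial : ℂ)⁻¹ • ((j : ℂ) * c - 0) ^ m •
          iteratedDeriv m (iteratedDeriv p H) 0)
        = fun m : ℕ => ((m.factorial : ℂ))⁻¹ * ((j : ℂ) * c) ^ m * iteratedDeriv (m + p) H 0 := by
      funext m
      rw [iteratedDeriv_iteratedDeriv H m p, sub_zero, smul_eq_mul, smul_eq_mul, mul_assoc]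
    rw [h1] at h0
    have h2 := h0.mul_left (a j * Complex.exp ((j : ℂ) * c * c₁))
    have h3 : (fun m : ℕ => a j * Complex.exp ((j : ℂ) * c * c₁) *
          (((m.factorial : ℂ))⁻¹ * ((j : ℂ) * c) ^ m * iteratedDeriv (m + p) H 0))
        = fun m : ℕ => a j * Complex.exp ((j : ℂ) * c * c₁) * ((m.factorial : ℂ))⁻¹
          * ((j : ℂ) * c) ^ m * iteratedDeriv (m + p) H 0 := by
      funext m; ring
    rwa [h3] at h2
  have S1 := hasSum_sum (s := Finset.range (n + 1)) (fun j _ => T j)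
  have S2 : HasSum
      (fun m : ℕ => (if m ≤ k then (k.choose m : ℂ) * c₁ ^ (k - m) else 0)
        * iteratedDeriv (m + p) H 0)
      (∑ m ∈ Finset.range (k + 1), (k.choose m : ℂ) * c₁ ^ (k - m)
        * iteratedDeriv (m + p) H 0) := by
    have h4 := hasSum_sum_of_ne_finset_zero (L := SummationFilter.unconditional ℕ) (s := Finset.range (k + 1))
      (f := fun m : ℕ => (if m ≤ k then (k.choose m : ℂ) * c₁ ^ (k - m) else 0)
        * iteratedDeriv (m + p) H 0)
      (fun m hm => by
        have hmk : ¬ m ≤ k := fun hmk => hm (Finset.mem_range.mpr (Nat.lt_succ_of_le hmk))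
        simp [hmk])
    have h6 : (∑ m ∈ Finset.range (k + 1),
          (if m ≤ k then (k.choose m : ℂ) * c₁ ^ (k - m) else 0) * iteratedDeriv (m + p) H 0)
        = ∑ m ∈ Finset.range (k + 1), (k.choose m : ℂ) * c₁ ^ (k - m)
          * iteratedDeriv (m + p) H 0 :=
      Finset.sum_congr rfl (fun m hm => by
        rw [if_pos (Nat.lt_succ_iff.mp (Finset.mem_range.mp hm))])
    rwa [h6] at h4
  have htar : (∑ j ∈ Finset.range (n + 1),
        a j * Complex.exp ((j : ℂ) * c * c₁) * iteratedDeriv p H ((j : ℂ) * c))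
      = ∑ m ∈ Finset.range (k + 1), (k.choose m : ℂ) * c₁ ^ (k - m)
        * iteratedDeriv (m + p) H 0 := by
    have := deriv_identity k n c c₁ a H hH heq p 0
    simpa [zero_add] using this
  have S3 := S1.sub S2
  rw [htar, sub_self] at S3
  have h5 : (fun m : ℕ =>
      (∑ j ∈ Finset.range (n + 1), a j * Complex.exp ((j : ℂ) * c * c₁)
        * ((m.factorial : ℂ))⁻¹ * ((j : ℂ) * c) ^ m * iteratedDeriv (m + p) H 0)
      - (if m ≤ k then (k.choose m : ℂ) * c₁ ^ (k - m) else 0) * iteratedDeriv (m + p) H 0)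
      = fun m : ℕ =>
      ((∑ j ∈ Finset.range (n + 1),
          a j * Complex.exp ((j : ℂ) * c * c₁) * ((m.factorial : ℂ))⁻¹ * ((j : ℂ) * c) ^ m)
        - (if m ≤ k then (k.choose m : ℂ) * c₁ ^ (k - m) else 0))
      * iteratedDeriv (m + p) H 0 := by
    funext m
    rw [sub_mul, Finset.sum_mul]
  rwa [h5] at S3

private lemma all_zero (u F : ℕ → ℂ) (A B : ℝ) (hA : 0 ≤ A) (hB : 1 ≤ B)
    (hFb : ∀ m : ℕ, 1 ≤ m → ‖F m‖ ≤ A * B ^ m)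
    (hF0 : F 0 ≠ 0)
    (hdecay : ∀ δ : ℝ, 0 < δ → ∃ C : ℝ, 0 ≤ C ∧ ∀ q, ‖u q‖ ≤ C * δ ^ q)
    (hhs : ∀ p : ℕ, HasSum (fun m => F m * u (m + p)) 0) :
    ∀ q, u q = 0 := by
  have hB0 : (0:ℝ) < B := lt_of_lt_of_le one_pos hB
  set γ : ℝ := ‖F 0‖ with hγdef
  have hγ : 0 < γ := norm_pos_iff.mpr hF0
  set δ : ℝ := min ((2*B)⁻¹) (γ/(4*A*B+1)) with hδdef
  have hδ : 0 < δ := lt_min (by positivity) (by positivity)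
  have hBδ : B * δ ≤ 1/2 := by
    have h1 : B * δ ≤ B * (2*B)⁻¹ :=
      mul_le_mul_of_nonneg_left (min_le_left _ _) hB0.le
    have h2 : B * (2*B)⁻¹ = 1/2 := by
      field_simp
    linarith
  have hBδ1 : B * δ < 1 := lt_of_le_of_lt hBδ (by norm_num)
  have hBδ0 : (0:ℝ) ≤ B * δ := by positivity
  have h2AB : 2*(A*B*δ) ≤ γ/2 := by
    have hδ2 : δ ≤ γ/(4*A*B+1) := min_le_right _ _
    have h1 : 4*A*B*δ ≤ 4*A*B*(γ/(4*A*B+1)) :=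
      mul_le_mul_of_nonneg_left hδ2 (by positivity)
    have h2 : 4*A*B*(γ/(4*A*B+1)) = γ * (4*A*B/(4*A*B+1)) := by ring
    have h3 : 4*A*B/(4*A*B+1) ≤ 1 := (div_le_one (by positivity)).mpr (by linarith)
    have h4 : γ * (4*A*B/(4*A*B+1)) ≤ γ * 1 := mul_le_mul_of_nonneg_left h3 hγ.le
    linarith
  have key : ∀ C' : ℝ, 0 ≤ C' → (∀ q, ‖u q‖ ≤ C' * δ ^ q) →
      ∀ p, ‖u p‖ ≤ (C'/2) * δ ^ p := by
    intro C' hC' hb p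
    have hs := hhs p
    have hsm : Summable (fun m => F m * u (m + p)) := hs.summable
    have hsplit : F 0 * u (0 + p) + ∑' m, F (m+1) * u (m + 1 + p) = 0 := by
      rw [← Summable.tsum_eq_zero_add hsm, hs.tsum_eq]
    rw [Nat.zero_add] at hsplit
    have hmaj : ∀ m : ℕ, ‖F (m+1) * u (m + 1 + p)‖ ≤ (A*B*C'*δ^(p+1)) * (B*δ)^m := by
      intro m
      calc ‖F (m+1) * u (m + 1 + p)‖ = ‖F (m+1)‖ * ‖u (m + 1 + p)‖ := norm_mul _ _
        _ ≤ (A*B^(m+1)) * (C' * δ^(m+1+p)) :=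
            mul_le_mul (hFb _ (Nat.succ_le_succ (Nat.zero_le m))) (hb _)
              (norm_nonneg _) (by positivity)
        _ = (A*B*C'*δ^(p+1)) * (B*δ)^m := by
            rw [show m+1+p = m + (p+1) by omega, pow_add, pow_succ, mul_pow]
            ring
    have hgeo : Summable (fun m : ℕ => (A*B*C'*δ^(p+1)) * (B*δ)^m) :=
      (summable_geometric_of_lt_one hBδ0 hBδ1).mul_left _
    have hnormsum : Summable (fun m => ‖F (m+1) * u (m + 1 + p)‖) :=
      Summable.of_nonneg_of_le (fun _ => norm_nonneg _) hmaj hgeo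
    have htail : ‖∑' m, F (m+1) * u (m + 1 + p)‖ ≤ (A*B*C'*δ^(p+1)) * (1-B*δ)⁻¹ := by
      calc ‖∑' m, F (m+1) * u (m + 1 + p)‖ ≤ ∑' m, ‖F (m+1) * u (m + 1 + p)‖ :=
            norm_tsum_le_tsum_norm hnormsum
        _ ≤ ∑' m : ℕ, (A*B*C'*δ^(p+1)) * (B*δ)^m := Summable.tsum_le_tsum hmaj hnormsum hgeo
        _ = (A*B*C'*δ^(p+1)) * ∑' m : ℕ, (B*δ)^m := tsum_mul_left
        _ = (A*B*C'*δ^(p+1)) * (1-B*δ)⁻¹ := by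
            rw [tsum_geometric_of_lt_one hBδ0 hBδ1]
    have hinv : (1-B*δ)⁻¹ ≤ 2 := by
      have h5 : (2:ℝ)⁻¹ ≤ 1 - B*δ := by linarith
      have := inv_anti₀ (by norm_num : (0:ℝ) < 2⁻¹) h5
      simpa using this
    have heq2 : ‖F 0 * u p‖ = ‖∑' m, F (m+1) * u (m + 1 + p)‖ := by
      have : F 0 * u p = -∑' m, F (m+1) * u (m + 1 + p) :=
        eq_neg_of_add_eq_zero_left hsplit
      rw [this, norm_neg]
    have hchain : γ * ‖u p‖ ≤ γ * ((C'/2) * δ^p) := by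
      have e1 : γ * ‖u p‖ = ‖F 0 * u p‖ := (norm_mul _ _).symm
      have e2 : ‖F 0 * u p‖ ≤ (A*B*C'*δ^(p+1)) * 2 := by
        rw [heq2]
        refine htail.trans (mul_le_mul_of_nonneg_left hinv (by positivity))
      have e3 : (A*B*C'*δ^(p+1)) * 2 = (2*(A*B*δ)) * (C' * δ^p) := by
        rw [pow_succ]; ring
      have e4 : (2*(A*B*δ)) * (C' * δ^p) ≤ (γ/2) * (C' * δ^p) :=
        mul_le_mul_of_nonneg_right h2AB (by positivity)
      have e5 : (γ/2) * (C' * δ^p) = γ * ((C'/2) * δ^p) := by ring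
      linarith [e1 ▸ (e2.trans_eq e3)]
    exact le_of_mul_le_mul_left hchain hγ
  obtain ⟨C, hC0, hCb⟩ := hdecay δ hδ
  have hN : ∀ N : ℕ, ∀ p, ‖u p‖ ≤ (C / 2^N) * δ ^ p := by
    intro N
    induction N with
    | zero => simpa using hCb
    | succ N ih =>
        intro p
        have h6 := key (C / 2^N) (by positivity) ih p
        have : (C / 2^N) / 2 = C / 2^(N+1) := by rw [pow_succ]; ring
        rwa [this] at h6
  intro q
  have hlim : Tendsto (fun N : ℕ => (C / 2^N) * δ ^ q) atTop (nhds 0) := by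
    have h7 : (fun N : ℕ => (C / 2^N) * δ ^ q) = fun N : ℕ => (C * δ ^ q) * (1/2:ℝ)^N := by
      funext N
      rw [div_pow, one_pow]
      ring
    rw [h7]
    have := tendsto_pow_atTop_nhds_zero_of_lt_one (by norm_num : (0:ℝ) ≤ 1/2) (by norm_num)
    simpa using this.const_mul (C * δ ^ q)
  have hle : ‖u q‖ ≤ 0 := ge_of_tendsto' hlim (fun N => hN N q)
  exact norm_le_zero_iff.mp hle

/-- if `H ≢ 0` is entire of order `< 1` and satisfies
`Σ aⱼ e^{jcc₁} H(z+jc) = Σ C(k,j) c₁^{k-j} H⁽ʲ⁾(z)`, then `c₁^k = Σ aⱼ e^{jcc₁}`. -/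
theorem stmt11 (k n : ℕ) (hk : 1 ≤ k) (hn : 1 ≤ n) (c c₁ : ℂ) (a : ℕ → ℂ)
    (H : ℂ → ℂ) (hH : Differentiable ℂ H) (hord : entireOrder H < 1)
    (hne : ∃ z : ℂ, H z ≠ 0)
    (heq : ∀ z : ℂ, ∑ j ∈ Finset.range (n + 1),
        a j * Complex.exp ((j : ℂ) * c * c₁) * H (z + (j : ℂ) * c)
      = ∑ j ∈ Finset.range (k + 1),
        (k.choose j : ℂ) * c₁ ^ (k - j) * iteratedDeriv j H z) :
    c₁ ^ k = ∑ j ∈ Finset.range (n + 1), a j * Complex.exp ((j : ℂ) * c * c₁) := by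
  by_contra hc
  -- notation
  have hgb : ∀ ε : ℝ, 0 < ε → ∃ C : ℝ, 1 ≤ C ∧ ∀ z : ℂ, ‖H z‖ ≤ C * Real.exp (ε * ‖z‖) :=
    fun ε hε => growth_bound hH hord hε
  set A : ℝ := (∑ j ∈ Finset.range (n + 1), ‖a j * Complex.exp ((j : ℂ) * c * c₁)‖)
    + (max 1 ‖c₁‖) ^ k with hAdef
  set B : ℝ := max (max ((n : ℝ) * ‖c‖) 1) (k : ℝ) with hBdef
  have hA : 0 ≤ A :=
    add_nonneg (Finset.sum_nonneg fun j _ => norm_nonneg _) (by positivity)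
  have hB : 1 ≤ B := le_trans (le_max_right _ _) (le_max_left _ _)
  set F : ℕ → ℂ := fun m =>
    (∑ j ∈ Finset.range (n + 1),
        a j * Complex.exp ((j : ℂ) * c * c₁) * ((m.factorial : ℂ))⁻¹ * ((j : ℂ) * c) ^ m)
      - (if m ≤ k then (k.choose m : ℂ) * c₁ ^ (k - m) else 0) with hFdef
  have hFb : ∀ m : ℕ, 1 ≤ m → ‖F m‖ ≤ A * B ^ m := by
    intro m _
    have hfac1 : (1 : ℝ) ≤ (m.factorial : ℝ) := by exact_mod_cast m.factorial_pos
    have part1 : ‖∑ j ∈ Finset.range (n + 1),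
        a j * Complex.exp ((j : ℂ) * c * c₁) * ((m.factorial : ℂ))⁻¹ * ((j : ℂ) * c) ^ m‖
        ≤ (∑ j ∈ Finset.range (n + 1), ‖a j * Complex.exp ((j : ℂ) * c * c₁)‖) * B ^ m := by
      refine (norm_sum_le _ _).trans ?_
      rw [Finset.sum_mul]
      refine Finset.sum_le_sum fun j hj => ?_
      have hj' : (j : ℝ) ≤ n := by
        exact_mod_cast Nat.lt_succ_iff.mp (Finset.mem_range.mp hj)
      have hjc : ‖(j : ℂ) * c‖ ≤ B := by
        rw [norm_mul, Complex.norm_natCast]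
        calc (j : ℝ) * ‖c‖ ≤ (n : ℝ) * ‖c‖ :=
              mul_le_mul_of_nonneg_right hj' (norm_nonneg _)
          _ ≤ B := le_trans (le_max_left _ _) (le_max_left _ _)
      have hinv : ‖((m.factorial : ℂ))⁻¹‖ ≤ 1 := by
        rw [norm_inv, Complex.norm_natCast]
        exact inv_le_one_of_one_le₀ hfac1
      calc ‖a j * Complex.exp ((j : ℂ) * c * c₁) * ((m.factorial : ℂ))⁻¹ * ((j : ℂ) * c) ^ m‖
          = ‖a j * Complex.exp ((j : ℂ) * c * c₁)‖ * ‖((m.factorial : ℂ))⁻¹‖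
            * ‖(j : ℂ) * c‖ ^ m := by rw [norm_mul, norm_mul, norm_pow]
        _ ≤ ‖a j * Complex.exp ((j : ℂ) * c * c₁)‖ * 1 * B ^ m := by
            refine mul_le_mul ?_ (pow_le_pow_left₀ (norm_nonneg _) hjc m) (by positivity)
              (by positivity)
            exact mul_le_mul_of_nonneg_left hinv (norm_nonneg _)
        _ = ‖a j * Complex.exp ((j : ℂ) * c * c₁)‖ * B ^ m := by rw [mul_one]
    have part2 : ‖(if m ≤ k then (k.choose m : ℂ) * c₁ ^ (k - m) else 0)‖
        ≤ (max 1 ‖c₁‖) ^ k * B ^ m := by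
      by_cases hmk : m ≤ k
      · rw [if_pos hmk, norm_mul, Complex.norm_natCast, norm_pow]
        have hch : (k.choose m : ℝ) ≤ B ^ m := by
          calc (k.choose m : ℝ) ≤ (k : ℝ) ^ m / (m.factorial : ℝ) :=
                Nat.choose_le_pow_div m k
            _ ≤ (k : ℝ) ^ m := div_le_self (by positivity) hfac1
            _ ≤ B ^ m := pow_le_pow_left₀ (by positivity) (le_max_right _ _) m
        have hc₁ : ‖c₁‖ ^ (k - m) ≤ (max 1 ‖c₁‖) ^ k := by
          calc ‖c₁‖ ^ (k - m) ≤ (max 1 ‖c₁‖) ^ (k - m) :=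
                pow_le_pow_left₀ (norm_nonneg _) (le_max_right _ _) _
            _ ≤ (max 1 ‖c₁‖) ^ k :=
                pow_le_pow_right₀ (le_max_left _ _) (Nat.sub_le k m)
        calc (k.choose m : ℝ) * ‖c₁‖ ^ (k - m) ≤ B ^ m * (max 1 ‖c₁‖) ^ k :=
              mul_le_mul hch hc₁ (by positivity) (by positivity)
          _ = (max 1 ‖c₁‖) ^ k * B ^ m := by ring
      · rw [if_neg hmk, norm_zero]
        positivity
    calc ‖F m‖ ≤ ‖∑ j ∈ Finset.range (n + 1),
          a j * Complex.exp ((j : ℂ) * c * c₁) * ((m.factorial : ℂ))⁻¹ * ((j : ℂ) * c) ^ m‖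
        + ‖(if m ≤ k then (k.choose m : ℂ) * c₁ ^ (k - m) else 0)‖ := norm_sub_le _ _
      _ ≤ (∑ j ∈ Finset.range (n + 1), ‖a j * Complex.exp ((j : ℂ) * c * c₁)‖) * B ^ m
        + (max 1 ‖c₁‖) ^ k * B ^ m := add_le_add part1 part2
      _ = A * B ^ m := by rw [hAdef]; ring
  have hF0 : F 0 ≠ 0 := by
    have : F 0 = (∑ j ∈ Finset.range (n + 1), a j * Complex.exp ((j : ℂ) * c * c₁))
        - c₁ ^ k := by
      rw [hFdef]
      simp
    rw [this]
    exact sub_ne_zero.mpr (Ne.symm hc)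
  have hdecay : ∀ δ : ℝ, 0 < δ → ∃ C : ℝ, 0 ≤ C ∧
      ∀ q, ‖iteratedDeriv q H 0‖ ≤ C * δ ^ q := by
    intro δ hδ
    obtain ⟨C, hC1, hCb⟩ := coeff_decay hH hgb hδ
    exact ⟨C, by linarith, hCb⟩
  have hhs : ∀ p : ℕ, HasSum (fun m => F m * iteratedDeriv (m + p) H 0) 0 := by
    intro p
    have := key_hasSum k n c c₁ a H hH heq p
    exact this
  have hzero : ∀ q, iteratedDeriv q H 0 = 0 :=
    all_zero (fun q => iteratedDeriv q H 0) F A B hA hB hFb hF0 hdecay hhs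
  obtain ⟨z, hz⟩ := hne
  have htay := Complex.taylorSeries_eq_of_entire' 0 z hH
  have hzs : ∀ m : ℕ, ((m.factorial : ℂ))⁻¹ * iteratedDeriv m H 0 * (z - 0) ^ m = 0 := by
    intro m
    rw [hzero m]
    ring
  rw [tsum_congr hzs, tsum_zero] at htay
  exact hz htay.symm
end
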